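/- arXiv:math/9902139 — 5 statements merged into one kernel-verified Lean document; each statement's English description precedes it below -/
import Mathlib

section
/- For every 1 ≤ j ≤ n−1 and all nonzero complex ζ_1,…,ζ_m, ξ_1,…,ξ_n such that every infinite product appearing in a denominator below is nonzero, the function F satisfies the exchange equation F(ζ_1,…,ζ_m | ξ_1,…,ξ_{j−1},ξ_{j+1},ξ_j,ξ_{j+2},…,ξ_n | x) = r^{*}(ξ_j/ξ_{j+1}) · F(ζ_1,…,ζ_m | ξ_1,…,ξ_n | x), where r^{*}(ζ) = −ζ^{−1} (q^{2N} z^{−1}; q^{2N})_∞ (q^{2N−2} z; q^{2N})_∞ / ((q^{2N} z; q^{2N})_∞ (q^{2N−2} z^{−1}; q^{2N})_∞) with z = ζ^N. -/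
open scoped BigOperators

/-- The infinite q-Pochhammer symbol `(z; p)_∞ = ∏_{k=0}^∞ (1 - p^k z)`. -/
noncomputable def poch (z p : ℂ) : ℂ := ∏' k : ℕ, (1 - p ^ k * z)

/-- The double infinite product `(z; p₁, p₂)_∞ = ∏_{k,l≥0} (1 - p₁^k p₂^l z)`. -/
noncomputable def poch2 (z p₁ p₂ : ℂ) : ℂ := ∏' kl : ℕ × ℕ, (1 - p₁ ^ kl.1 * p₂ ^ kl.2 * z)

/-- The theta function `θ_p(z) = (z;p)_∞ (p z⁻¹;p)_∞ (p;p)_∞`. -/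
noncomputable def thetaF (p z : ℂ) : ℂ := poch z p * poch (p * z⁻¹) p * poch p p

/-- `{w} = (w; q^{2N}, x^N)_∞`. -/
noncomputable def curly (N : ℕ) (q x w : ℂ) : ℂ := poch2 w (q ^ (2 * N)) (x ^ N)

/-- Numerator of `h^{(σ)}(w|x)`. -/
noncomputable def hNum (N : ℕ) (σ : ℤ) (q x w : ℂ) : ℂ :=
  curly N q x (q ^ (1 + σ) * x ^ N * w⁻¹) * curly N q x (q ^ (1 + σ) * w)

/-- Denominator of `h^{(σ)}(w|x)`. -/
noncomputable def hDen (N : ℕ) (σ : ℤ) (q x w : ℂ) : ℂ :=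
  curly N q x (q ^ (2 * (N : ℤ) - 1 + σ) * x ^ N * w⁻¹)
    * curly N q x (q ^ (2 * (N : ℤ) - 1 + σ) * w)

/-- `h^{(σ)}(w|x)`. -/
noncomputable def hFun (N : ℕ) (σ : ℤ) (q x w : ℂ) : ℂ := hNum N σ q x w / hDen N σ q x w

/-- `F̄(z|u|x)`. -/
noncomputable def Fbar (N : ℕ) {m n : ℕ} (q x : ℂ) (z : Fin m → ℂ) (u : Fin n → ℂ) : ℂ :=
  (∏ a : Fin m, ∏ b : Fin m, if a < b then hFun N 1 q x (z b / z a) else 1)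
    * (∏ a : Fin n, ∏ b : Fin m, hFun N 0 q x (u a / z b))⁻¹
    * (∏ a : Fin n, ∏ b : Fin n, if a < b then hFun N (-1) q x (u a / u b) else 1)

/-- `F(ζ|ξ|x)`. -/
noncomputable def Ffun (N : ℕ) {m n : ℕ} (q x : ℂ) (ζ : Fin m → ℂ) (ξ : Fin n → ℂ) : ℂ :=
  Fbar N q x (fun a => ζ a ^ N) (fun b => ξ b ^ N)
    * ((∏ a : Fin m, ∏ b : Fin n, thetaF x (-(ξ b / ζ a)))
        / ((∏ a : Fin m, ∏ b : Fin m, if a < b then thetaF x (-(ζ b / ζ a)) else 1)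
            * (∏ a : Fin n, ∏ b : Fin n, if a < b then thetaF x (-(ξ a / ξ b)) else 1))) ^ (N - 1)

/-- All infinite products appearing in a denominator of `F(ζ|ξ|x)` are nonzero. -/
def FDenOK (N : ℕ) {m n : ℕ} (q x : ℂ) (ζ : Fin m → ℂ) (ξ : Fin n → ℂ) : Prop :=
  (∀ a b : Fin m, a ≠ b → hDen N 1 q x (ζ b ^ N / ζ a ^ N) ≠ 0)
  ∧ (∀ (a : Fin n) (b : Fin m), hNum N 0 q x (ξ a ^ N / ζ b ^ N) ≠ 0
      ∧ hDen N 0 q x (ξ a ^ N / ζ b ^ N) ≠ 0)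
  ∧ (∀ a b : Fin n, a ≠ b → hDen N (-1) q x (ξ a ^ N / ξ b ^ N) ≠ 0)
  ∧ (∀ a b : Fin m, a ≠ b → thetaF x (-(ζ b / ζ a)) ≠ 0)
  ∧ (∀ a b : Fin n, a ≠ b → thetaF x (-(ξ a / ξ b)) ≠ 0)

/-- `r^{*}(ζ)` with `z = ζ^N`. -/
noncomputable def rStarFun (N : ℕ) (q ζ : ℂ) : ℂ :=
  -ζ⁻¹ * (poch (q ^ (2 * N) * (ζ ^ N)⁻¹) (q ^ (2 * N))
        * poch (q ^ (2 * N - 2) * ζ ^ N) (q ^ (2 * N)))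
    / (poch (q ^ (2 * N) * ζ ^ N) (q ^ (2 * N))
        * poch (q ^ (2 * N - 2) * (ζ ^ N)⁻¹) (q ^ (2 * N)))


set_option maxHeartbeats 1000000

section AuxLemmas

lemma multipliable_one_sub {ι : Type*} (f : ι → ℂ) (hf : Summable fun i => ‖f i‖) :
    Multipliable fun i => 1 - f i := by
  by_cases h0 : ∃ i, f i = 1
  · obtain ⟨i₀, hi₀⟩ := h0
    refine ⟨0, ?_⟩
    have hev : ∀ᶠ s : Finset ι in Filter.atTop, ∏ i ∈ s, (1 - f i) = 0 :=
      Filter.eventually_atTop.2 ⟨{i₀}, fun s hs =>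
        Finset.prod_eq_zero (hs (Finset.mem_singleton_self i₀)) (by simp [hi₀])⟩
    exact Filter.Tendsto.congr' (by filter_upwards [hev] with s h using h.symm) tendsto_const_nhds
  · push_neg at h0
    have hne : ∀ i, 1 - f i ≠ 0 := fun i h => h0 i (sub_eq_zero.mp h).symm
    have hsmall : ∀ᶠ i in Filter.cofinite, ‖f i‖ < 1/2 :=
      (hf.tendsto_cofinite_zero).eventually_lt_const (by norm_num)
    have hlog : Summable fun i => Complex.log (1 - f i) := by
      refine Summable.of_norm_bounded_eventually (g := fun i => 3/2 * ‖f i‖) (hf.mul_left _) ?_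
      filter_upwards [hsmall] with i hi
      calc ‖Complex.log (1 - f i)‖ = ‖Complex.log (1 + -f i)‖ := by rw [sub_eq_add_neg]
        _ ≤ 3/2 * ‖-f i‖ := Complex.norm_log_one_add_half_le_self
            (by rw [norm_neg]; linarith)
        _ = 3/2 * ‖f i‖ := by rw [norm_neg]
    exact Complex.multipliable_of_summable_log hlog

lemma mult_poch (p z : ℂ) (hp : ‖p‖ < 1) : Multipliable fun k : ℕ => 1 - p ^ k * z := by
  apply multipliable_one_sub
  have h : Summable fun k : ℕ => ‖p‖ ^ k * ‖z‖ :=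
    (summable_geometric_of_lt_one (norm_nonneg p) hp).mul_right _
  simpa [norm_mul, norm_pow] using h

lemma mult_poch2 (p₁ p₂ z : ℂ) (h₁ : ‖p₁‖ < 1) (h₂ : ‖p₂‖ < 1) :
    Multipliable fun kl : ℕ × ℕ => 1 - p₁ ^ kl.1 * p₂ ^ kl.2 * z := by
  apply multipliable_one_sub
  have h : Summable fun kl : ℕ × ℕ => ‖p₁‖ ^ kl.1 * (‖p₂‖ ^ kl.2 * ‖z‖) :=
    Summable.mul_of_nonneg (summable_geometric_of_lt_one (norm_nonneg _) h₁)
      ((summable_geometric_of_lt_one (norm_nonneg _) h₂).mul_right _)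
      (fun k => pow_nonneg (norm_nonneg _) _)
      (fun l => mul_nonneg (pow_nonneg (norm_nonneg _) _) (norm_nonneg _))
  simpa [norm_mul, norm_pow, mul_assoc] using h

lemma poch_split (p z : ℂ) (hp : ‖p‖ < 1) : poch z p = (1 - z) * poch (p * z) p := by
  have h : Multipliable fun n : ℕ => 1 - p ^ (n + 1) * z := by
    refine (mult_poch p (p * z) hp).congr fun k => ?_
    ring_nf
  rw [poch, tprod_eq_zero_mul' h]
  simp only [pow_zero, one_mul]
  congr 1
  rw [poch]
  exact (tprod_congr fun k => by ring_nf).symm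

lemma poch2_split (p₁ p₂ z : ℂ) (h₁ : ‖p₁‖ < 1) (h₂ : ‖p₂‖ < 1) :
    poch2 z p₁ p₂ = poch z p₁ * poch2 (p₂ * z) p₁ p₂ := by
  have hm := mult_poch2 p₁ p₂ z h₁ h₂
  have hm' := mult_poch2 p₁ p₂ (p₂ * z) h₁ h₂
  have hin : ∀ (w : ℂ) (k : ℕ), Multipliable fun l : ℕ => 1 - p₁ ^ k * p₂ ^ l * w :=
    fun w k => (mult_poch p₂ (p₁ ^ k * w) h₂).congr fun l => by ring_nf
  have houter : Multipliable fun k : ℕ => ∏' l : ℕ, (1 - p₁ ^ k * p₂ ^ l * (p₂ * z)) := by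
    have hσ : Multipliable fun kl : Σ _ : ℕ, ℕ => 1 - p₁ ^ kl.1 * p₂ ^ kl.2 * (p₂ * z) :=
      ((Equiv.sigmaEquivProd ℕ ℕ).multipliable_iff).2 hm'
    exact hσ.sigma' fun k => hin _ k
  calc poch2 z p₁ p₂ = ∏' k : ℕ, ∏' l : ℕ, (1 - p₁ ^ k * p₂ ^ l * z) :=
        hm.tprod_prod' (fun k => hin z k)
    _ = ∏' k : ℕ, ((1 - p₁ ^ k * z) * ∏' l : ℕ, (1 - p₁ ^ k * p₂ ^ l * (p₂ * z))) := by
        refine tprod_congr fun k => ?_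
        have h1 : (∏' l : ℕ, (1 - p₁ ^ k * p₂ ^ l * z)) = poch (p₁ ^ k * z) p₂ :=
          tprod_congr fun l => by ring_nf
        rw [h1, poch_split p₂ _ h₂]
        congr 1
        rw [poch]
        exact tprod_congr fun l => by ring_nf
    _ = (∏' k : ℕ, (1 - p₁ ^ k * z)) * ∏' k : ℕ, ∏' l : ℕ, (1 - p₁ ^ k * p₂ ^ l * (p₂ * z)) :=
        Multipliable.tprod_mul (mult_poch p₁ z h₁) houter
    _ = poch z p₁ * poch2 (p₂ * z) p₁ p₂ := by
        rw [poch, poch2, hm'.tprod_prod' (fun k => hin _ k)]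

lemma theta_inv (p z : ℂ) (hp : ‖p‖ < 1) (hz : z ≠ 0) :
    thetaF p z⁻¹ = -z⁻¹ * thetaF p z := by
  have h1 : poch z⁻¹ p = (1 - z⁻¹) * poch (p * z⁻¹) p := poch_split p z⁻¹ hp
  have h2 : poch z p = (1 - z) * poch (p * z) p := poch_split p z hp
  have key : (1 - z⁻¹) = -z⁻¹ * (1 - z) := by field_simp; ring
  rw [thetaF, thetaF, h1, h2, inv_inv, key]
  ring

lemma curly_split (N : ℕ) (hN : 1 ≤ N) (q x : ℂ) (hq1 : ‖q‖ < 1) (hx1 : ‖x‖ < 1) (w : ℂ) :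
    curly N q x w = poch w (q ^ (2 * N)) * curly N q x (x ^ N * w) := by
  have h1 : ‖q ^ (2 * N)‖ < 1 := by
    rw [norm_pow]; exact pow_lt_one₀ (norm_nonneg _) hq1 (by omega)
  have h2 : ‖x ^ N‖ < 1 := by
    rw [norm_pow]; exact pow_lt_one₀ (norm_nonneg _) hx1 (by omega)
  exact poch2_split _ _ _ h1 h2

lemma abstract_step (A B E F Pa Pb Pc Pd t u z : ℂ)
    (hu : u ≠ 0) (hz : t * u = z) (hz0 : z ≠ 0)
    (hE : E ≠ 0) (hF : F ≠ 0) (hPb : Pb ≠ 0) (hPc : Pc ≠ 0) (hPd : Pd ≠ 0) :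
    A * ((1 - z⁻¹) * (Pa * B)) / (E * (Pd * F)) * t
      = -u⁻¹ * (Pa * Pb) / (Pc * Pd) * (B * ((1 - z) * (Pc * A)) / (F * (Pb * E))) := by
  have ht : t ≠ 0 := fun h => hz0 (by rw [← hz, h, zero_mul])
  subst hz
  field_simp
  ring

lemma main_scalar (N : ℕ) (hN : 2 ≤ N) (q x : ℂ) (hq1 : ‖q‖ < 1) (hx1 : ‖x‖ < 1)
    (ζ : ℂ) (hζ : ζ ≠ 0)
    (hd1 : hDen N (-1) q x (ζ ^ N) ≠ 0) (hd2 : hDen N (-1) q x ((ζ ^ N)⁻¹) ≠ 0)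
    (hr1 : poch (q ^ (2 * N) * ζ ^ N) (q ^ (2 * N)) ≠ 0)
    (hr2 : poch (q ^ (2 * N - 2) * (ζ ^ N)⁻¹) (q ^ (2 * N)) ≠ 0) :
    hFun N (-1) q x ((ζ ^ N)⁻¹) * ζ ^ (N - 1)
      = rStarFun N q ζ * hFun N (-1) q x (ζ ^ N) := by
  obtain ⟨M, rfl⟩ : ∃ M, N = M + 2 := ⟨N - 2, by omega⟩
  have e1 : 2 * (M + 2) - 2 = 2 * M + 2 := by omega
  have e2 : M + 2 - 1 = M + 1 := by omega
  have hQ1 : ‖q ^ (2 * (M + 2))‖ < 1 := by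
    rw [norm_pow]; exact pow_lt_one₀ (norm_nonneg _) hq1 (by omega)
  have hzero : (1 : ℤ) + -1 = 0 := by norm_num
  have hcexp : q ^ (2 * ((M + 2 : ℕ) : ℤ) - 1 + -1) = q ^ (2 * M + 2) := by
    have h : (2 * ((M + 2 : ℕ) : ℤ) - 1 + -1) = ((2 * M + 2 : ℕ) : ℤ) := by push_cast; ring
    rw [h, zpow_natCast]
  have hz : ζ ^ (M + 2) ≠ 0 := pow_ne_zero _ hζ
  have csplit := curly_split (M + 2) (by omega) q x hq1 hx1
  have hnum_eq : ∀ w : ℂ, hNum (M + 2) (-1) q x w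
      = curly (M + 2) q x (x ^ (M + 2) * w⁻¹) * curly (M + 2) q x w := by
    intro w
    rw [hNum, hzero, zpow_zero, one_mul, one_mul]
  have hden_eq : ∀ w : ℂ, hDen (M + 2) (-1) q x w
      = curly (M + 2) q x (q ^ (2 * M + 2) * x ^ (M + 2) * w⁻¹)
        * curly (M + 2) q x (q ^ (2 * M + 2) * w) := by
    intro w
    rw [hDen, hcexp]
  have hN1 : hNum (M + 2) (-1) q x ((ζ ^ (M + 2))⁻¹)
      = curly (M + 2) q x (x ^ (M + 2) * ζ ^ (M + 2))
        * ((1 - (ζ ^ (M + 2))⁻¹)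
          * (poch (q ^ (2 * (M + 2)) * (ζ ^ (M + 2))⁻¹) (q ^ (2 * (M + 2)))
            * curly (M + 2) q x (x ^ (M + 2) * (ζ ^ (M + 2))⁻¹))) := by
    rw [hnum_eq, inv_inv, csplit ((ζ ^ (M + 2))⁻¹), poch_split _ _ hQ1]
    ring
  have hN2 : hNum (M + 2) (-1) q x (ζ ^ (M + 2))
      = curly (M + 2) q x (x ^ (M + 2) * (ζ ^ (M + 2))⁻¹)
        * ((1 - ζ ^ (M + 2))
          * (poch (q ^ (2 * (M + 2)) * ζ ^ (M + 2)) (q ^ (2 * (M + 2)))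
            * curly (M + 2) q x (x ^ (M + 2) * ζ ^ (M + 2)))) := by
    rw [hnum_eq, csplit (ζ ^ (M + 2)), poch_split _ _ hQ1]
    ring
  have hD1 : hDen (M + 2) (-1) q x ((ζ ^ (M + 2))⁻¹)
      = curly (M + 2) q x (q ^ (2 * M + 2) * x ^ (M + 2) * ζ ^ (M + 2))
        * (poch (q ^ (2 * M + 2) * (ζ ^ (M + 2))⁻¹) (q ^ (2 * (M + 2)))
          * curly (M + 2) q x (q ^ (2 * M + 2) * x ^ (M + 2) * (ζ ^ (M + 2))⁻¹)) := by
    rw [hden_eq, inv_inv, csplit (q ^ (2 * M + 2) * (ζ ^ (M + 2))⁻¹),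
      show x ^ (M + 2) * (q ^ (2 * M + 2) * (ζ ^ (M + 2))⁻¹)
        = q ^ (2 * M + 2) * x ^ (M + 2) * (ζ ^ (M + 2))⁻¹ from by ring]
  have hD2 : hDen (M + 2) (-1) q x (ζ ^ (M + 2))
      = curly (M + 2) q x (q ^ (2 * M + 2) * x ^ (M + 2) * (ζ ^ (M + 2))⁻¹)
        * (poch (q ^ (2 * M + 2) * ζ ^ (M + 2)) (q ^ (2 * (M + 2)))
          * curly (M + 2) q x (q ^ (2 * M + 2) * x ^ (M + 2) * ζ ^ (M + 2))) := by
    rw [hden_eq, csplit (q ^ (2 * M + 2) * ζ ^ (M + 2)),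
      show x ^ (M + 2) * (q ^ (2 * M + 2) * ζ ^ (M + 2))
        = q ^ (2 * M + 2) * x ^ (M + 2) * ζ ^ (M + 2) from by ring]
  rw [hD1] at hd2
  rw [hD2] at hd1
  have hE : curly (M + 2) q x (q ^ (2 * M + 2) * x ^ (M + 2) * ζ ^ (M + 2)) ≠ 0 := by
    intro h; exact hd2 (by rw [h, zero_mul])
  have hF : curly (M + 2) q x (q ^ (2 * M + 2) * x ^ (M + 2) * (ζ ^ (M + 2))⁻¹) ≠ 0 := by
    intro h; exact hd2 (by rw [h, mul_zero, mul_zero])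
  have hPb : poch (q ^ (2 * M + 2) * ζ ^ (M + 2)) (q ^ (2 * (M + 2))) ≠ 0 := by
    intro h; exact hd1 (by rw [h, zero_mul, mul_zero])
  rw [e1] at hr2
  rw [hFun, hFun, hN1, hN2, hD1, hD2, rStarFun, e1, e2]
  exact abstract_step _ _ _ _ _ _ _ _ _ _ _ hζ (pow_succ ζ (M + 1)).symm hz hE hF hPb hr1 hr2

lemma swap_lt_iff {n : ℕ} {j j' a b : Fin n} (hjj : (j : ℕ) + 1 = (j' : ℕ))
    (hab1 : ¬(a = j ∧ b = j')) (hab2 : ¬(a = j' ∧ b = j)) :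
    (Equiv.swap j j' a < Equiv.swap j j' b ↔ a < b) := by
  simp only [Equiv.swap_apply_def]
  split_ifs <;> simp only [Fin.lt_def, Fin.ext_iff, not_and] at * <;> omega

lemma tri_prod_eq {n : ℕ} (g : Fin n → Fin n → ℂ) (j j' : Fin n) (hlt : j < j') :
    (∏ a : Fin n, ∏ b : Fin n, if a < b then g a b else 1)
      = g j j' * ∏ p ∈ (Finset.univ.filter fun p : Fin n × Fin n => p.1 < p.2).erase (j, j'),
          g p.1 p.2 := by
  rw [← Finset.prod_product' (f := fun a b : Fin n => if a < b then g a b else 1),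
    Finset.univ_product_univ, ← Finset.prod_filter]
  have hmem : (j, j') ∈ Finset.univ.filter (fun p : Fin n × Fin n => p.1 < p.2) := by
    rw [Finset.mem_filter]
    exact ⟨Finset.mem_univ _, hlt⟩
  exact (Finset.mul_prod_erase (Finset.univ.filter fun p : Fin n × Fin n => p.1 < p.2)
    (fun p => g p.1 p.2) hmem).symm

lemma tri_prod_swap_eq {n : ℕ} (g : Fin n → Fin n → ℂ) (j j' : Fin n)
    (hjj : (j : ℕ) + 1 = (j' : ℕ)) (hlt : j < j') :
    (∏ a : Fin n, ∏ b : Fin n,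
        if a < b then g (Equiv.swap j j' a) (Equiv.swap j j' b) else 1)
      = g j' j * ∏ p ∈ (Finset.univ.filter fun p : Fin n × Fin n => p.1 < p.2).erase (j, j'),
          g p.1 p.2 := by
  rw [tri_prod_eq (fun a b => g (Equiv.swap j j' a) (Equiv.swap j j' b)) j j' hlt]
  rw [Equiv.swap_apply_left, Equiv.swap_apply_right]
  congr 1
  refine Finset.prod_bij' (fun p _ => (Equiv.swap j j' p.1, Equiv.swap j j' p.2))
    (fun p _ => (Equiv.swap j j' p.1, Equiv.swap j j' p.2)) ?_ ?_ ?_ ?_ ?_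
  · intro p hp
    rw [Finset.mem_erase, Finset.mem_filter] at hp ⊢
    obtain ⟨hne, -, hl⟩ := hp
    have h1 : ¬(p.1 = j ∧ p.2 = j') := fun ⟨h1, h2⟩ => hne (Prod.ext h1 h2)
    have h2 : ¬(p.1 = j' ∧ p.2 = j) := by
      rintro ⟨h1, h2⟩
      rw [h1, h2] at hl
      exact absurd (lt_trans hlt hl) (lt_irrefl _)
    refine ⟨?_, Finset.mem_univ _, (swap_lt_iff hjj h1 h2).mpr hl⟩
    intro hcon
    rw [Prod.ext_iff] at hcon
    obtain ⟨hc1, hc2⟩ := hcon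
    have e1 : p.1 = j' := by
      have := congrArg (Equiv.swap j j') hc1
      rwa [Equiv.swap_apply_self, Equiv.swap_apply_left] at this
    have e2 : p.2 = j := by
      have := congrArg (Equiv.swap j j') hc2
      rwa [Equiv.swap_apply_self, Equiv.swap_apply_right] at this
    exact h2 ⟨e1, e2⟩
  · intro p hp
    rw [Finset.mem_erase, Finset.mem_filter] at hp ⊢
    obtain ⟨hne, -, hl⟩ := hp
    have h1 : ¬(p.1 = j ∧ p.2 = j') := fun ⟨h1, h2⟩ => hne (Prod.ext h1 h2)
    have h2 : ¬(p.1 = j' ∧ p.2 = j) := by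
      rintro ⟨h1, h2⟩
      rw [h1, h2] at hl
      exact absurd (lt_trans hlt hl) (lt_irrefl _)
    refine ⟨?_, Finset.mem_univ _, (swap_lt_iff hjj h1 h2).mpr hl⟩
    intro hcon
    rw [Prod.ext_iff] at hcon
    obtain ⟨hc1, hc2⟩ := hcon
    have e1 : p.1 = j' := by
      have := congrArg (Equiv.swap j j') hc1
      rwa [Equiv.swap_apply_self, Equiv.swap_apply_left] at this
    have e2 : p.2 = j := by
      have := congrArg (Equiv.swap j j') hc2
      rwa [Equiv.swap_apply_self, Equiv.swap_apply_right] at this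
    exact h2 ⟨e1, e2⟩
  · intro p _; simp [Equiv.swap_apply_self]
  · intro p _; simp [Equiv.swap_apply_self]
  · intro p _; rfl

lemma final_assembly (A Bp P0 T1 T2 P3 θ0 ζ0 h1 h2 r : ℂ) (K : ℕ)
    (hms : h1 * ζ0 ^ K = r * h2) :
    A * Bp⁻¹ * (h1 * P0) * (T1 / (T2 * (ζ0⁻¹ * θ0 * P3))) ^ K
      = r * (A * Bp⁻¹ * (h2 * P0) * (T1 / (T2 * (θ0 * P3))) ^ K) := by
  have hd : T1 / (T2 * (ζ0⁻¹ * θ0 * P3)) = ζ0 * (T1 / (T2 * (θ0 * P3))) := by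
    rw [div_eq_mul_inv, div_eq_mul_inv, mul_inv, mul_inv, mul_inv, mul_inv, inv_inv]
    ring
  rw [hd, mul_pow]
  calc A * Bp⁻¹ * (h1 * P0) * (ζ0 ^ K * (T1 / (T2 * (θ0 * P3))) ^ K)
      = (h1 * ζ0 ^ K) * (A * Bp⁻¹ * P0 * (T1 / (T2 * (θ0 * P3))) ^ K) := by ring
    _ = (r * h2) * (A * Bp⁻¹ * P0 * (T1 / (T2 * (θ0 * P3))) ^ K) := by rw [hms]
    _ = _ := by ring

end AuxLemmas

/-- exchange equation for `F` in the `ξ` variables: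
`F(ζ|…,ξ_{j+1},ξ_j,…|x) = r^{*}(ξ_j/ξ_{j+1}) F(ζ|ξ|x)`. -/
theorem F_exchange_xi (N : ℕ) (hN : 2 ≤ N) (m n : ℕ) (q x : ℂ)
    (hq0 : 0 < ‖q‖) (hq1 : ‖q‖ < 1)
    (hx0 : 0 < ‖x‖) (hx1 : ‖x‖ < 1)
    (ζ : Fin m → ℂ) (ξ : Fin n → ℂ)
    (hζ : ∀ a, ζ a ≠ 0) (hξ : ∀ b, ξ b ≠ 0)
    (j : Fin n) (hj : (j : ℕ) + 1 < n)
    (hF1 : FDenOK N q x ζ ξ)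
    (hF2 : FDenOK N q x ζ (fun a => ξ (Equiv.swap j ⟨(j : ℕ) + 1, hj⟩ a)))
    (hr1 : poch (q ^ (2 * N) * (ξ j / ξ ⟨(j : ℕ) + 1, hj⟩) ^ N) (q ^ (2 * N)) ≠ 0)
    (hr2 : poch (q ^ (2 * N - 2) * ((ξ j / ξ ⟨(j : ℕ) + 1, hj⟩) ^ N)⁻¹) (q ^ (2 * N)) ≠ 0) :
    Ffun N q x ζ (fun a => ξ (Equiv.swap j ⟨(j : ℕ) + 1, hj⟩ a))
      = rStarFun N q (ξ j / ξ ⟨(j : ℕ) + 1, hj⟩) * Ffun N q x ζ ξ := by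
  set j' : Fin n := ⟨(j : ℕ) + 1, hj⟩ with hj'def
  have hjj : (j : ℕ) + 1 = (j' : ℕ) := rfl
  have hlt : j < j' := by
    rw [Fin.lt_def]; omega
  have hnejj : j ≠ j' := ne_of_lt hlt
  have hnejj' : j' ≠ j := (ne_of_lt hlt).symm
  have hq1' : ‖q‖ < 1 := by exact hq1
  have hx1' : ‖x‖ < 1 := by exact hx1
  have hζ0 : ξ j / ξ j' ≠ 0 := div_ne_zero (hξ j) (hξ j')
  have hargC : ξ j ^ N / ξ j' ^ N = (ξ j / ξ j') ^ N := (div_pow _ _ _).symm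
  have hargC' : ξ j' ^ N / ξ j ^ N = ((ξ j / ξ j') ^ N)⁻¹ := by
    rw [← div_pow, ← inv_pow, inv_div]
  -- nonvanishing of the h-denominators
  have hd1 := hF1.2.2.1 j j' hnejj
  have hd2 := hF1.2.2.1 j' j hnejj'
  rw [hargC] at hd1
  rw [hargC'] at hd2
  -- the scalar exchange identity
  have hms := main_scalar N hN q x hq1' hx1' (ξ j / ξ j') hζ0 hd1 hd2 hr1 hr2
  -- theta inversion for the (j', j) entry
  have hth : thetaF x (-(ξ j' / ξ j)) = (ξ j / ξ j')⁻¹ * thetaF x (-(ξ j / ξ j')) := by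
    have harg : -(ξ j' / ξ j) = (-(ξ j / ξ j'))⁻¹ := by rw [inv_neg, inv_div]
    rw [harg, theta_inv x _ hx1' (neg_ne_zero.mpr hζ0), inv_neg, neg_neg]
  -- reindexing lemmas
  simp only [Ffun, Fbar]
  have hB : (∏ a : Fin n, ∏ b : Fin m,
        hFun N 0 q x (ξ (Equiv.swap j j' a) ^ N / ζ b ^ N))
      = ∏ a : Fin n, ∏ b : Fin m, hFun N 0 q x (ξ a ^ N / ζ b ^ N) := by
    exact Equiv.prod_comp (Equiv.swap j j')
      (fun a => ∏ b : Fin m, hFun N 0 q x (ξ a ^ N / ζ b ^ N))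
  have hT1 : (∏ a : Fin m, ∏ b : Fin n, thetaF x (-(ξ (Equiv.swap j j' b) / ζ a)))
      = ∏ a : Fin m, ∏ b : Fin n, thetaF x (-(ξ b / ζ a)) := by
    exact Finset.prod_congr rfl fun a _ =>
      Equiv.prod_comp (Equiv.swap j j') (fun b => thetaF x (-(ξ b / ζ a)))
  have hCsw : (∏ a : Fin n, ∏ b : Fin n,
        if a < b then hFun N (-1) q x (ξ (Equiv.swap j j' a) ^ N / ξ (Equiv.swap j j' b) ^ N)
        else 1)
      = hFun N (-1) q x (ξ j' ^ N / ξ j ^ N)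
        * ∏ p ∈ (Finset.univ.filter fun p : Fin n × Fin n => p.1 < p.2).erase (j, j'),
            hFun N (-1) q x (ξ p.1 ^ N / ξ p.2 ^ N) := by
    exact tri_prod_swap_eq (fun a b => hFun N (-1) q x (ξ a ^ N / ξ b ^ N)) j j' hjj hlt
  have hC : (∏ a : Fin n, ∏ b : Fin n,
        if a < b then hFun N (-1) q x (ξ a ^ N / ξ b ^ N) else 1)
      = hFun N (-1) q x (ξ j ^ N / ξ j' ^ N)
        * ∏ p ∈ (Finset.univ.filter fun p : Fin n × Fin n => p.1 < p.2).erase (j, j'),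
            hFun N (-1) q x (ξ p.1 ^ N / ξ p.2 ^ N) := by
    exact tri_prod_eq (fun a b => hFun N (-1) q x (ξ a ^ N / ξ b ^ N)) j j' hlt
  have hT3sw : (∏ a : Fin n, ∏ b : Fin n,
        if a < b then thetaF x (-(ξ (Equiv.swap j j' a) / ξ (Equiv.swap j j' b))) else 1)
      = thetaF x (-(ξ j' / ξ j))
        * ∏ p ∈ (Finset.univ.filter fun p : Fin n × Fin n => p.1 < p.2).erase (j, j'),
            thetaF x (-(ξ p.1 / ξ p.2)) := by
    exact tri_prod_swap_eq (fun a b => thetaF x (-(ξ a / ξ b))) j j' hjj hlt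
  have hT3 : (∏ a : Fin n, ∏ b : Fin n,
        if a < b then thetaF x (-(ξ a / ξ b)) else 1)
      = thetaF x (-(ξ j / ξ j'))
        * ∏ p ∈ (Finset.univ.filter fun p : Fin n × Fin n => p.1 < p.2).erase (j, j'),
            thetaF x (-(ξ p.1 / ξ p.2)) := by
    exact tri_prod_eq (fun a b => thetaF x (-(ξ a / ξ b))) j j' hlt
  rw [hB, hT1, hCsw, hC, hT3sw, hT3, hargC, hargC', hth]
  exact final_assembly _ _ _ _ _ _ _ _ _ _ _ _ hms
end

section
/- Define the components R̄(ζ)^{ij}_{i'j'} by R̄(ζ)(v_i ⊗ v_j) = Σ_{i',j'} R̄(ζ)^{ij}_{i'j'} v_{i'} ⊗ v_{j'}. Then the R-matrix is invariant under the cyclic Dynkin-diagram rotation: for all 0 ≤ i,j,i',j' ≤ N−1, R̄(ζ)^{σ(i)σ(j)}_{σ(i')σ(j')} = R̄(ζ)^{ij}_{i'j'}, where σ(a) = a+1 mod N. -/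
open scoped BigOperators

/-- `b(ζ) = q(1-ζ^N)/(1-q²ζ^N)`. -/
noncomputable def bFun (N : ℕ) (q ζ : ℂ) : ℂ := q * (1 - ζ ^ N) / (1 - q ^ 2 * ζ ^ N)

/-- `c_{jk}(ζ) = (1-q²) ζ^{Nθ(k-j)+j-k}/(1-q²ζ^N)` where `θ(s)=1` iff `s ≥ 0`. -/
noncomputable def cFun (N : ℕ) (q : ℂ) (j k : Fin N) (ζ : ℂ) : ℂ :=
  (1 - q ^ 2) * ζ ^ ((N : ℤ) * (if j ≤ k then 1 else 0) + (j : ℤ) - (k : ℤ))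
    / (1 - q ^ 2 * ζ ^ N)

/-- Components `R̄(ζ)^{ij}_{i'j'}` of the R-matrix, defined by
`R̄(ζ)(v_j ⊗ v_j) = v_j ⊗ v_j` and
`R̄(ζ)(v_j ⊗ v_k) = b(ζ) v_j ⊗ v_k + c_{jk}(ζ) v_k ⊗ v_j` for `j ≠ k`. -/
noncomputable def Rc (N : ℕ) (q ζ : ℂ) (i j i' j' : Fin N) : ℂ :=
  if i = j then (if i' = i ∧ j' = j then 1 else 0)
  else if i' = i ∧ j' = j then bFun N q ζ
  else if i' = j ∧ j' = i then cFun N q i j ζ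
  else 0

/-- the R-matrix is invariant under the cyclic Dynkin-diagram rotation
`σ(a) = a + 1 mod N`. -/
theorem R_dynkin_invariance (N : ℕ) (hN : 2 ≤ N) (q ζ : ℂ) (hq : q ≠ 0) (hζ : ζ ≠ 0)
    (hden : 1 - q ^ 2 * ζ ^ N ≠ 0) (i j i' j' : Fin N) :
    Rc N q ζ ⟨((i : ℕ) + 1) % N, Nat.mod_lt _ (by omega)⟩
        ⟨((j : ℕ) + 1) % N, Nat.mod_lt _ (by omega)⟩
        ⟨((i' : ℕ) + 1) % N, Nat.mod_lt _ (by omega)⟩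
        ⟨((j' : ℕ) + 1) % N, Nat.mod_lt _ (by omega)⟩
      = Rc N q ζ i j i' j' := by
  have hinj : ∀ a b : Fin N,
      ((⟨((a : ℕ) + 1) % N, Nat.mod_lt _ (by omega)⟩ : Fin N) =
        ⟨((b : ℕ) + 1) % N, Nat.mod_lt _ (by omega)⟩) ↔ a = b := by
    intro a b
    have ha := a.isLt
    have hb := b.isLt
    simp only [Fin.ext_iff]
    rcases eq_or_ne ((a : ℕ) + 1) N with h1 | h1 <;>
      rcases eq_or_ne ((b : ℕ) + 1) N with h2 | h2 <;>
      [rw [h1, h2, Nat.mod_self];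
       rw [h1, Nat.mod_self, Nat.mod_eq_of_lt (by omega)];
       rw [h2, Nat.mod_self, Nat.mod_eq_of_lt (by omega)];
       rw [Nat.mod_eq_of_lt (show (a : ℕ) + 1 < N by omega),
           Nat.mod_eq_of_lt (by omega)]] <;>
      omega
  have hc : ∀ a b : Fin N, a ≠ b →
      cFun N q (⟨((a : ℕ) + 1) % N, Nat.mod_lt _ (by omega)⟩ : Fin N)
        (⟨((b : ℕ) + 1) % N, Nat.mod_lt _ (by omega)⟩ : Fin N) ζ = cFun N q a b ζ := by
    intro a b _
    have ha := a.isLt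
    have hb := b.isLt
    unfold cFun
    congr 3
    simp only [Fin.le_def]
    rcases eq_or_ne ((a : ℕ) + 1) N with h1 | h1 <;>
      rcases eq_or_ne ((b : ℕ) + 1) N with h2 | h2 <;>
      [rw [h1, h2, Nat.mod_self];
       rw [h1, Nat.mod_self, Nat.mod_eq_of_lt (by omega)];
       rw [h2, Nat.mod_self, Nat.mod_eq_of_lt (by omega)];
       rw [Nat.mod_eq_of_lt (show (a : ℕ) + 1 < N by omega),
           Nat.mod_eq_of_lt (by omega)]] <;>
      split_ifs <;> push_cast <;> omega
  unfold Rc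
  simp only [hinj]
  split_ifs with h1 h2 h3 <;> try rfl
  exact hc i j h1
end

section
/- Let m ≥ 2. Suppose that for each 1 ≤ i ≤ m−1, all indices and all admissible nonzero arguments g satisfies the exchange relation: if α ≠ β then g(…,ζ_{i+1},ζ_i,…|ξ)^{…,α,β,…}_μ = (ζ_{i+1}/ζ_i)^{N−1} ( b(ζ_i/ζ_{i+1}) g(…,ζ_i,ζ_{i+1},…|ξ)^{…,β,α,…}_μ + c_{αβ}(ζ_i/ζ_{i+1}) g(…,ζ_i,ζ_{i+1},…|ξ)^{…,α,β,…}_μ ), and g(…,ζ_{i+1},ζ_i,…|ξ)^{…,α,α,…}_μ = (ζ_{i+1}/ζ_i)^{N−1} g(…,ζ_i,ζ_{i+1},…|ξ)^{…,α,α,…}_μ, where the displayed indices sit at positions i, i+1. Then for all 0 ≤ k < l ≤ N−1 and 1 ≤ i ≤ m−1, whenever ζ_i^N ≠ ζ_{i+1}^N and 1 − q²(ζ_i/ζ_{i+1})^N ≠ 0: g(…,ζ_i,ζ_{i+1},…|ξ)^{…,l,k,…}_μ = a^{(3)}_{kl}(ζ_i/ζ_{i+1}) g(…,ζ_i,ζ_{i+1},…|ξ)^{…,k,l,…}_μ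 + a_1(ζ_i/ζ_{i+1}) g(…,ζ_{i+1},ζ_i,…|ξ)^{…,k,l,…}_μ, where a_1(ζ) = q^{−1} ζ^{N−1} (1 − q²ζ^N)/(1 − ζ^N) and a^{(3)}_{kl}(ζ) = −q^{−1} ζ^{N+k−l} (1 − q²)/(1 − ζ^N). -/
open scoped BigOperators

/-- `a_1(ζ) = q⁻¹ ζ^{N-1} (1-q²ζ^N)/(1-ζ^N)`. -/
noncomputable def a1Fun (N : ℕ) (q ζ : ℂ) : ℂ :=
  q⁻¹ * ζ ^ (N - 1) * (1 - q ^ 2 * ζ ^ N) / (1 - ζ ^ N)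

/-- `a^{(3)}_{kl}(ζ) = -q⁻¹ ζ^{N+k-l} (1-q²)/(1-ζ^N)`. -/
noncomputable def a3Fun (N : ℕ) (q : ℂ) (k l : Fin N) (ζ : ℂ) : ℂ :=
  -(q⁻¹ * ζ ^ ((N : ℤ) + (k : ℤ) - (l : ℤ)) * (1 - q ^ 2) / (1 - ζ ^ N))


private lemma aux_h1 (N : ℕ) (q c : ℂ) (hq : q ≠ 0) (hc : c ≠ 0)
    (hcN : (1 : ℂ) - c ^ N ≠ 0) (hq2 : (1 : ℂ) - q ^ 2 * c ^ N ≠ 0) :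
    a1Fun N q c * (c ^ (N - 1))⁻¹ * bFun N q c = 1 := by
  unfold a1Fun bFun
  have hcp : c ^ (N - 1) ≠ 0 := pow_ne_zero _ hc
  field_simp

private lemma aux_h2 (N : ℕ) (q c : ℂ) (k l : Fin N) (hkl : k < l) (hq : q ≠ 0) (hc : c ≠ 0)
    (hcN : (1 : ℂ) - c ^ N ≠ 0) (hq2 : (1 : ℂ) - q ^ 2 * c ^ N ≠ 0) :
    a3Fun N q k l c + a1Fun N q c * (c ^ (N - 1))⁻¹ * cFun N q k l c = 0 := by
  unfold a1Fun a3Fun cFun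
  rw [if_pos (le_of_lt hkl), mul_one]
  have hcp : c ^ (N - 1) ≠ 0 := pow_ne_zero _ hc
  field_simp
  ring

/-- Hecke-type relation (`ζ` side) derived from the exchange relation
for `Ḡ`-type functions. -/
theorem hecke_upper (N : ℕ) (hN : 2 ≤ N) (q : ℂ) (hq : q ≠ 0) (m n : ℕ) (hm : 2 ≤ m)
    (g : (Fin m → ℂ) → (Fin n → ℂ) → (Fin m → Fin N) → (Fin n → Fin N) → ℂ)
    (hex : ∀ (ζ : Fin m → ℂ) (ξ : Fin n → ℂ), (∀ t, ζ t ≠ 0) → (∀ t, ξ t ≠ 0) →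
      ∀ (i : Fin m) (hi : (i : ℕ) + 1 < m) (ε : Fin m → Fin N) (μ : Fin n → Fin N)
        (α β : Fin N),
        (α ≠ β →
          g (fun t => ζ (Equiv.swap i ⟨(i : ℕ) + 1, hi⟩ t)) ξ
              (Function.update (Function.update ε i α) ⟨(i : ℕ) + 1, hi⟩ β) μ
            = (ζ ⟨(i : ℕ) + 1, hi⟩ / ζ i) ^ (N - 1)
              * (bFun N q (ζ i / ζ ⟨(i : ℕ) + 1, hi⟩)
                    * g ζ ξ (Function.update (Function.update ε i β) ⟨(i : ℕ) + 1, hi⟩ α) μ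
                  + cFun N q α β (ζ i / ζ ⟨(i : ℕ) + 1, hi⟩)
                    * g ζ ξ (Function.update (Function.update ε i α) ⟨(i : ℕ) + 1, hi⟩ β) μ))
        ∧ g (fun t => ζ (Equiv.swap i ⟨(i : ℕ) + 1, hi⟩ t)) ξ
              (Function.update (Function.update ε i α) ⟨(i : ℕ) + 1, hi⟩ α) μ
            = (ζ ⟨(i : ℕ) + 1, hi⟩ / ζ i) ^ (N - 1)
              * g ζ ξ (Function.update (Function.update ε i α) ⟨(i : ℕ) + 1, hi⟩ α) μ) :
    ∀ (ζ : Fin m → ℂ) (ξ : Fin n → ℂ), (∀ t, ζ t ≠ 0) → (∀ t, ξ t ≠ 0) →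
      ∀ (i : Fin m) (hi : (i : ℕ) + 1 < m) (k l : Fin N), k < l →
        ζ i ^ N ≠ ζ ⟨(i : ℕ) + 1, hi⟩ ^ N →
        1 - q ^ 2 * (ζ i / ζ ⟨(i : ℕ) + 1, hi⟩) ^ N ≠ 0 →
        ∀ (ε : Fin m → Fin N) (μ : Fin n → Fin N),
          g ζ ξ (Function.update (Function.update ε i l) ⟨(i : ℕ) + 1, hi⟩ k) μ
            = a3Fun N q k l (ζ i / ζ ⟨(i : ℕ) + 1, hi⟩)
                * g ζ ξ (Function.update (Function.update ε i k) ⟨(i : ℕ) + 1, hi⟩ l) μ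
              + a1Fun N q (ζ i / ζ ⟨(i : ℕ) + 1, hi⟩)
                * g (fun t => ζ (Equiv.swap i ⟨(i : ℕ) + 1, hi⟩ t)) ξ
                    (Function.update (Function.update ε i k) ⟨(i : ℕ) + 1, hi⟩ l) μ := by
  intro ζ ξ hζ hξ i hi k l hkl hNe hq2 ε μ
  have hz0 : ζ i ≠ 0 := hζ i
  have hw0 : ζ ⟨(i : ℕ) + 1, hi⟩ ≠ 0 := hζ _
  set z := ζ i with hzdef
  set w := ζ ⟨(i : ℕ) + 1, hi⟩ with hwdef
  have hc0 : z / w ≠ 0 := div_ne_zero hz0 hw0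
  have hcN : (1 : ℂ) - (z / w) ^ N ≠ 0 := by
    intro h
    apply hNe
    have h1 : (1 : ℂ) = (z / w) ^ N := sub_eq_zero.mp h
    have h2 : z ^ N / w ^ N = 1 := by rw [← div_pow]; exact h1.symm
    exact (div_eq_one_iff_eq (pow_ne_zero _ hw0)).mp h2
  have hcp : (z / w) ^ (N - 1) ≠ 0 := pow_ne_zero _ hc0
  have H := (hex ζ ξ hζ hξ i hi ε μ k l).1 (ne_of_lt hkl)
  have hwz : w / z = (z / w)⁻¹ := by rw [inv_div]
  have h1 : a1Fun N q (z / w) * (w / z) ^ (N - 1) * bFun N q (z / w) = 1 := by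
    rw [hwz, inv_pow]
    exact aux_h1 N q (z / w) hq hc0 hcN hq2
  have h2 : a3Fun N q k l (z / w)
      + a1Fun N q (z / w) * (w / z) ^ (N - 1) * cFun N q k l (z / w) = 0 := by
    rw [hwz, inv_pow]
    exact aux_h2 N q (z / w) k l hkl hq hc0 hcN hq2
  rw [H]
  linear_combination
    (-(g ζ ξ (Function.update (Function.update ε i l) ⟨(i : ℕ) + 1, hi⟩ k) μ)) * h1
    + (-(g ζ ξ (Function.update (Function.update ε i k) ⟨(i : ℕ) + 1, hi⟩ l) μ)) * h2
end

section
/- Let n ≥ 2. Suppose that for each 1 ≤ i ≤ n−1, all indices and all admissible nonzero arguments g satisfies the exchange relation: if α ≠ β then g(ζ|…,ξ_{i+1},ξ_i,…)^{ε}_{…,α,β,…} = (ξ_i/ξ_{i+1})^{N−1} ( b(ξ_i/ξ_{i+1}) g(ζ|…,ξ_i,ξ_{i+1},…)^{ε}_{…,β,α,…} + c_{βα}(ξ_i/ξ_{i+1}) g(ζ|…,ξ_i,ξ_{i+1},…)^{ε}_{…,α,β,…} ), and g(ζ|…,ξ_{i+1},ξ_i,…)^{ε}_{…,α,α,…} =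 (ξ_i/ξ_{i+1})^{N−1} g(ζ|…,ξ_i,ξ_{i+1},…)^{ε}_{…,α,α,…}, where the displayed lower indices sit at positions i, i+1. Then for all 0 ≤ k < l ≤ N−1 and 1 ≤ i ≤ n−1, whenever ξ_i^N ≠ ξ_{i+1}^N and 1 − q²(ξ_i/ξ_{i+1})^N ≠ 0: g(ζ|…,ξ_i,ξ_{i+1},…)^{ε}_{…,l,k,…} = a^{(4)}_{kl}(ξ_i/ξ_{i+1}) g(ζ|…,ξ_i,ξ_{i+1},…)^{ε}_{…,k,l,…} + a_2(ξ_i/ξ_{i+1}) g(ζ|…,ξ_{i+1},ξ_i,…)^{ε}_{…,k,l,…}, where a_2(ζ) = q^{−1} ζ^{1−N} (1 − q²ζ^N)/(1 − ζ^N) and a^{(4)}_{kl}(ζ) = −q^{−1} ζ^{l−k} (1 − q²)/(1 − ζ^N). -/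
open scoped BigOperators

/-- `a_2(ζ) = q⁻¹ ζ^{1-N} (1-q²ζ^N)/(1-ζ^N)`. -/
noncomputable def a2Fun (N : ℕ) (q ζ : ℂ) : ℂ :=
  q⁻¹ * ζ ^ (1 - (N : ℤ)) * (1 - q ^ 2 * ζ ^ N) / (1 - ζ ^ N)

/-- `a^{(4)}_{kl}(ζ) = -q⁻¹ ζ^{l-k} (1-q²)/(1-ζ^N)`. -/
noncomputable def a4Fun (N : ℕ) (q : ℂ) (k l : Fin N) (ζ : ℂ) : ℂ :=
  -(q⁻¹ * ζ ^ ((l : ℤ) - (k : ℤ)) * (1 - q ^ 2) / (1 - ζ ^ N))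


lemma zpow_helper (N : ℕ) (hN : 1 ≤ N) {ζ : ℂ} (hζ : ζ ≠ 0) :
    ζ ^ (1 - (N : ℤ)) = (ζ ^ (N - 1))⁻¹ := by
  rw [← zpow_natCast ζ (N - 1), ← zpow_neg]
  congr 1
  have := Nat.cast_sub hN (R := ℤ)
  omega

set_option maxRecDepth 8000 in
lemma key1 (N : ℕ) (hN : 1 ≤ N) {q ζ : ℂ} (hq : q ≠ 0) (hζ : ζ ≠ 0)
    (h1 : 1 - ζ ^ N ≠ 0) (h2 : 1 - q ^ 2 * ζ ^ N ≠ 0) :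
    a2Fun N q ζ * (ζ ^ (N - 1) * bFun N q ζ) = 1 := by
  have hu : ζ ^ (N - 1) ≠ 0 := pow_ne_zero _ hζ
  rw [a2Fun, bFun, zpow_helper N hN hζ]
  set u := ζ ^ (N - 1)
  set A := 1 - q ^ 2 * ζ ^ N
  set B := 1 - ζ ^ N
  field_simp

set_option maxRecDepth 8000 in
lemma key2 (N : ℕ) (hN : 1 ≤ N) {q ζ : ℂ} (hq : q ≠ 0) (hζ : ζ ≠ 0)
    (h1 : 1 - ζ ^ N ≠ 0) (h2 : 1 - q ^ 2 * ζ ^ N ≠ 0) (k l : Fin N) (hkl : k < l) :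
    a4Fun N q k l ζ = -(a2Fun N q ζ * (ζ ^ (N - 1) * cFun N q l k ζ)) := by
  have hu : ζ ^ (N - 1) ≠ 0 := pow_ne_zero _ hζ
  have hif : (if l ≤ k then (1 : ℤ) else 0) = 0 := if_neg (not_le.mpr hkl)
  rw [a4Fun, a2Fun, cFun, hif, zpow_helper N hN hζ]
  have he : (N : ℤ) * 0 + (l : ℤ) - (k : ℤ) = (l : ℤ) - (k : ℤ) := by ring
  rw [he]
  have hw : ζ ^ ((l : ℤ) - (k : ℤ)) ≠ 0 := zpow_ne_zero _ hζ
  set w := ζ ^ ((l : ℤ) - (k : ℤ))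
  set u := ζ ^ (N - 1)
  set A := 1 - q ^ 2 * ζ ^ N
  set B := 1 - ζ ^ N
  field_simp

/-- Hecke-type relation (`ξ` side) derived from the exchange relation
for `Ḡ`-type functions. -/
theorem hecke_lower (N : ℕ) (hN : 2 ≤ N) (q : ℂ) (hq : q ≠ 0) (m n : ℕ) (hn : 2 ≤ n)
    (g : (Fin m → ℂ) → (Fin n → ℂ) → (Fin m → Fin N) → (Fin n → Fin N) → ℂ)
    (hex : ∀ (ζ : Fin m → ℂ) (ξ : Fin n → ℂ), (∀ t, ζ t ≠ 0) → (∀ t, ξ t ≠ 0) →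
      ∀ (i : Fin n) (hi : (i : ℕ) + 1 < n) (ε : Fin m → Fin N) (μ : Fin n → Fin N)
        (α β : Fin N),
        (α ≠ β →
          g ζ (fun t => ξ (Equiv.swap i ⟨(i : ℕ) + 1, hi⟩ t)) ε
              (Function.update (Function.update μ i α) ⟨(i : ℕ) + 1, hi⟩ β)
            = (ξ i / ξ ⟨(i : ℕ) + 1, hi⟩) ^ (N - 1)
              * (bFun N q (ξ i / ξ ⟨(i : ℕ) + 1, hi⟩)
                    * g ζ ξ ε (Function.update (Function.update μ i β) ⟨(i : ℕ) + 1, hi⟩ α)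
                  + cFun N q β α (ξ i / ξ ⟨(i : ℕ) + 1, hi⟩)
                    * g ζ ξ ε (Function.update (Function.update μ i α) ⟨(i : ℕ) + 1, hi⟩ β)))
        ∧ g ζ (fun t => ξ (Equiv.swap i ⟨(i : ℕ) + 1, hi⟩ t)) ε
              (Function.update (Function.update μ i α) ⟨(i : ℕ) + 1, hi⟩ α)
            = (ξ i / ξ ⟨(i : ℕ) + 1, hi⟩) ^ (N - 1)
              * g ζ ξ ε (Function.update (Function.update μ i α) ⟨(i : ℕ) + 1, hi⟩ α)) :
    ∀ (ζ : Fin m → ℂ) (ξ : Fin n → ℂ), (∀ t, ζ t ≠ 0) → (∀ t, ξ t ≠ 0) →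
      ∀ (i : Fin n) (hi : (i : ℕ) + 1 < n) (k l : Fin N), k < l →
        ξ i ^ N ≠ ξ ⟨(i : ℕ) + 1, hi⟩ ^ N →
        1 - q ^ 2 * (ξ i / ξ ⟨(i : ℕ) + 1, hi⟩) ^ N ≠ 0 →
        ∀ (ε : Fin m → Fin N) (μ : Fin n → Fin N),
          g ζ ξ ε (Function.update (Function.update μ i l) ⟨(i : ℕ) + 1, hi⟩ k)
            = a4Fun N q k l (ξ i / ξ ⟨(i : ℕ) + 1, hi⟩)
                * g ζ ξ ε (Function.update (Function.update μ i k) ⟨(i : ℕ) + 1, hi⟩ l)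
              + a2Fun N q (ξ i / ξ ⟨(i : ℕ) + 1, hi⟩)
                * g ζ (fun t => ξ (Equiv.swap i ⟨(i : ℕ) + 1, hi⟩ t)) ε
                    (Function.update (Function.update μ i k) ⟨(i : ℕ) + 1, hi⟩ l) := by
  
  intro ζ ξ hζ hξ i hi k l hkl hpow hq2 ε μ
  have hN1 : 1 ≤ N := le_trans (by norm_num) hN
  set z : ℂ := ξ i / ξ ⟨(i : ℕ) + 1, hi⟩ with hz
  have hz0 : z ≠ 0 := div_ne_zero (hξ i) (hξ _)
  have hzn : 1 - z ^ N ≠ 0 := by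
    intro h
    apply hpow
    have h' : z ^ N = 1 := by linear_combination -h
    rw [hz, div_pow, div_eq_one_iff_eq (pow_ne_zero _ (hξ _))] at h'
    exact h' 
  have hne : k ≠ l := ne_of_lt hkl
  have hC := (hex ζ ξ hζ hξ i hi ε μ k l).1 hne
  rw [hC]
  have h1 := key1 N hN1 hq hz0 hzn hq2
  have h2 := key2 N hN1 hq hz0 hzn hq2 k l hkl
  set A := g ζ ξ ε (Function.update (Function.update μ i l) ⟨(i : ℕ) + 1, hi⟩ k)
  set B := g ζ ξ ε (Function.update (Function.update μ i k) ⟨(i : ℕ) + 1, hi⟩ l)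
  linear_combination (-A) * h1 + (-B) * h2
end

section
/- Fix a content (k_0,…,k_{N−1}) of nonnegative integers with k_0 + ⋯ + k_{N−1} = m. There exist functions a^{M M'}(ζ_1,…,ζ_m) of ζ and q alone (depending on N, m and the ordered partitions M' ≤ M, but not on g, ξ or the lower indices) such that: for every g satisfying, for each 1 ≤ i ≤ m−1 and α ≠ β, the exchange relation g(…,ζ_{i+1},ζ_i,…|ξ)^{…,α,β,…}_μ = (ζ_{i+1}/ζ_i)^{N−1}( b(ζ_i/ζ_{i+1}) g(…,ζ_i,ζ_{i+1},…|ξ)^{…,β,α,…}_μ + c_{αβ}(ζ_i/ζ_{i+1}) g(…,ζ_i,ζ_{i+1},…|ξ)^{…,α,β,…}_μ ) together with g(…,ζ_{i+1},ζ_i,…|ξ)^{…,α,α,…}_μ = (ζ_{i+1}/ζ_i)^{N−1} g(…,ζ_i,ζ_{i+1},…|ξ)^{…,α,α,…}_μ, and for all ζ with ζ_a^N ≠ ζ_b^N and q²(ζ_a/ζ_b)^N ≠ 1 for a ≠ b, one has for every upper index sequence ε of content (k_0,…,k_{N−1}) with associated ordered partition M, and every lower index sequence μ: g(ζ_1,…,ζ_m|ξ)^{M}_{μ}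 = Σ_{M' ≤ M} a^{M M'}(ζ) · g(ζ_{M'_0},…,ζ_{M'_{N−1}}|ξ)^{M⁰}_{μ}, where the diagonal coefficient is a^{M M}(ζ) = ∏_{r>l} ∏_{a∈M_r, b∈M_l, a<b} a_1(ζ_a/ζ_b) with a_1(ζ) = q^{−1} ζ^{N−1} (1 − q²ζ^N)/(1 − ζ^N). -/
open scoped BigOperators

/-- A sequence `ε` has content `(k_0,…,k_{N-1})` iff `#{a : ε a = r} = k r` for all `r`. -/
def hasContent {m N : ℕ} (ε : Fin m → Fin N) (k : Fin N → ℕ) : Prop :=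
  ∀ r : Fin N, (Finset.univ.filter fun a => ε a = r).card = k r

instance {m N : ℕ} (ε : Fin m → Fin N) (k : Fin N → ℕ) : Decidable (hasContent ε k) := by
  unfold hasContent; infer_instance

/-- Lexicographic order on sequences, comparing from the left. -/
def lexLE {m N : ℕ} (a b : Fin m → Fin N) : Prop :=
  a = b ∨ ∃ i : Fin m, (∀ j : Fin m, j < i → a j = b j) ∧ a i < b i

instance {m N : ℕ} (a b : Fin m → Fin N) : Decidable (lexLE a b) := by
  unfold lexLE; infer_instance

/-- The minimal sequence `ε⁰ = (0^{k_0},1^{k_1},…,(N-1)^{k_{N-1}})` of content `k`: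
position `a` belongs to the block determined by the partial sums of `k`. -/
def minSeq (N m : ℕ) (hN : 0 < N) (k : Fin N → ℕ) (a : Fin m) : Fin N :=
  ⟨(Finset.univ.filter fun r : Fin N => (∑ r' ∈ Finset.Iic r, k r') ≤ (a : ℕ)).card % N,
    Nat.mod_lt _ hN⟩


namespace TriExp

variable {N m : ℕ}

/-- prefix count `#{j ≤ kk : ε j ≥ r}` -/
def C (ε : Fin m → Fin N) (kk : Fin m) (r : Fin N) : ℕ :=
  ∑ j : Fin m, if j ≤ kk ∧ r ≤ ε j then 1 else 0

/-- strict prefix count `#{j < kk : ε j ≥ r}` -/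
def Cs (ε : Fin m → Fin N) (kk : Fin m) (r : Fin N) : ℕ :=
  ∑ j : Fin m, if j < kk ∧ r ≤ ε j then 1 else 0

/-- dominance order -/
def Dom (ε' ε : Fin m → Fin N) : Prop := ∀ kk r, C ε' kk r ≤ C ε kk r

def inv (ε : Fin m → Fin N) : ℕ :=
  ∑ p : Fin m × Fin m, if p.1 < p.2 ∧ ε p.2 < ε p.1 then 1 else 0

lemma dom_refl (ε : Fin m → Fin N) : Dom ε ε := fun _ _ => le_rfl

lemma dom_trans {ε₁ ε₂ ε₃ : Fin m → Fin N} (h : Dom ε₁ ε₂) (h' : Dom ε₂ ε₃) : Dom ε₁ ε₃ :=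
  fun kk r => (h kk r).trans (h' kk r)

lemma C_eq_Cs_add (ε : Fin m → Fin N) (i : Fin m) (r : Fin N) :
    C ε i r = Cs ε i r + if r ≤ ε i then 1 else 0 := by
  unfold C Cs
  rw [← Finset.add_sum_erase _ _ (Finset.mem_univ i),
    ← Finset.add_sum_erase _ _ (Finset.mem_univ i)]
  have h1 : ∀ j ∈ Finset.univ.erase i,
      (if j ≤ i ∧ r ≤ ε j then 1 else 0) = (if j < i ∧ r ≤ ε j then 1 else 0) := by
    intro j hj
    have hne : j ≠ i := (Finset.mem_erase.mp hj).1
    have : j ≤ i ↔ j < i := ⟨fun h => lt_of_le_of_ne h hne, le_of_lt⟩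
    simp [this]
  rw [Finset.sum_congr rfl h1]
  simp [-not_le, lt_irrefl]
  omega

/-- `Dom` implies lexicographic `≤`. -/
lemma dom_lexLE {ε' ε : Fin m → Fin N} (h : Dom ε' ε) : _root_.lexLE ε' ε := by
  by_cases heq : ε' = ε
  · exact Or.inl heq
  · right
    have hne : (Finset.univ.filter fun j => ε' j ≠ ε j).Nonempty := by
      rcases Function.ne_iff.mp heq with ⟨j, hj⟩
      exact ⟨j, by simp [hj]⟩
    set i := Finset.min' _ hne with hi
    have hmem : ε' i ≠ ε i := by
      have := Finset.min'_mem _ hne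
      simpa using this
    have hpre : ∀ j : Fin m, j < i → ε' j = ε j := by
      intro j hj
      by_contra hc
      exact absurd (Finset.min'_le _ j (by simpa using hc)) (not_le.mpr hj)
    refine ⟨i, hpre, ?_⟩
    rcases lt_or_gt_of_ne hmem with h1 | h1
    · exact h1
    · exfalso
      have hC := h i (ε' i)
      rw [C_eq_Cs_add, C_eq_Cs_add] at hC
      have hCs : Cs ε' i (ε' i) = Cs ε i (ε' i) := by
        unfold Cs
        refine Finset.sum_congr rfl fun j _ => ?_
        by_cases hj : j < i
        · rw [hpre j hj]
        · simp [hj]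
      rw [hCs] at hC
      have : ¬ (ε' i ≤ ε i) := not_le.mpr h1
      simp [this] at hC
section Swap

variable {N m : ℕ}

lemma fin_le_iff {a b : Fin m} : a ≤ b ↔ (a:ℕ) ≤ (b:ℕ) := Iff.rfl
lemma fin_lt_iff {a b : Fin m} : a < b ↔ (a:ℕ) < (b:ℕ) := Iff.rfl

variable (i₀ j₀ : Fin m)

lemma C_comp_swap (hj : (j₀ : ℕ) = (i₀ : ℕ) + 1) (ε : Fin m → Fin N) {kk : Fin m}
    (hkk : kk ≠ i₀) (r : Fin N) : C (ε ∘ Equiv.swap i₀ j₀) kk r = C ε kk r := by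
  have hkk' : (kk : ℕ) ≠ (i₀ : ℕ) := fun h => hkk (Fin.ext h)
  have key : ∀ j : Fin m, j ≤ kk ↔ Equiv.swap i₀ j₀ j ≤ kk := by
    intro j
    rcases eq_or_ne j i₀ with rfl | h1
    · rw [Equiv.swap_apply_left, fin_le_iff, fin_le_iff, hj]; omega
    rcases eq_or_ne j j₀ with rfl | h2
    · rw [Equiv.swap_apply_right, fin_le_iff, fin_le_iff, hj]; omega
    · rw [Equiv.swap_apply_of_ne_of_ne h1 h2]
  calc C (ε ∘ Equiv.swap i₀ j₀) kk r
      = ∑ j : Fin m, if Equiv.swap i₀ j₀ j ≤ kk ∧ r ≤ ε (Equiv.swap i₀ j₀ j) then 1 else 0 := by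
        unfold C
        exact Finset.sum_congr rfl fun j _ => by
          rw [Function.comp_apply]; exact if_congr (and_congr_left' (key j)) rfl rfl
    _ = C ε kk r := Equiv.sum_comp (Equiv.swap i₀ j₀) (fun j => if j ≤ kk ∧ r ≤ ε j then 1 else 0)

lemma Cs_comp_swap (hj : (j₀ : ℕ) = (i₀ : ℕ) + 1) (ε : Fin m → Fin N) (r : Fin N) :
    Cs (ε ∘ Equiv.swap i₀ j₀) i₀ r = Cs ε i₀ r := by
  unfold Cs
  refine Finset.sum_congr rfl fun j _ => ?_
  by_cases hj' : j < i₀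
  · have h1 : j ≠ i₀ := ne_of_lt hj'
    have h2 : j ≠ j₀ := by
      intro h; rw [h] at hj'; rw [fin_lt_iff, hj] at hj'; omega
    rw [Function.comp_apply, Equiv.swap_apply_of_ne_of_ne h1 h2]
  · simp [hj']

lemma C_comp_swap_self (hj : (j₀ : ℕ) = (i₀ : ℕ) + 1) (ε : Fin m → Fin N) (r : Fin N) :
    C (ε ∘ Equiv.swap i₀ j₀) i₀ r = Cs ε i₀ r + if r ≤ ε j₀ then 1 else 0 := by
  rw [C_eq_Cs_add, Cs_comp_swap i₀ j₀ hj]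
  congr 1
  rw [Function.comp_apply, Equiv.swap_apply_left]

lemma Cs_j₀_eq_C_i₀ (hj : (j₀ : ℕ) = (i₀ : ℕ) + 1) (ε : Fin m → Fin N) (r : Fin N) :
    Cs ε j₀ r = C ε i₀ r := by
  unfold Cs C
  refine Finset.sum_congr rfl fun j _ => ?_
  have : j < j₀ ↔ j ≤ i₀ := by rw [fin_lt_iff, fin_le_iff, hj]; omega
  exact if_congr (and_congr_left' this) rfl rfl

lemma Cs_eq_C_pred (ε : Fin m → Fin N) (r : Fin N) (h0 : (i₀ : ℕ) ≠ 0)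
    (h1 : (i₀ : ℕ) - 1 < m) : Cs ε i₀ r = C ε ⟨(i₀ : ℕ) - 1, h1⟩ r := by
  unfold Cs C
  refine Finset.sum_congr rfl fun j _ => ?_
  have : j < i₀ ↔ j ≤ (⟨(i₀ : ℕ) - 1, h1⟩ : Fin m) := by rw [fin_lt_iff, fin_le_iff]; simp; omega
  exact if_congr (and_congr_left' this) rfl rfl

lemma dom_swap_of_descent (hj : (j₀ : ℕ) = (i₀ : ℕ) + 1) (ε : Fin m → Fin N)
    (hd : ε j₀ < ε i₀) : Dom (ε ∘ Equiv.swap i₀ j₀) ε := by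
  intro kk r
  rcases eq_or_ne kk i₀ with heq | hkk
  · subst kk
    rw [C_comp_swap_self i₀ j₀ hj, C_eq_Cs_add]
    have himp : r ≤ ε j₀ → r ≤ ε i₀ := fun h => h.trans hd.le
    split_ifs with h1 h2
    · omega
    · exact absurd (himp h1) h2
    · omega
    · omega
  · rw [C_comp_swap i₀ j₀ hj ε hkk]

lemma not_dom_of_descent (hj : (j₀ : ℕ) = (i₀ : ℕ) + 1) (ε : Fin m → Fin N)
    (hd : ε j₀ < ε i₀) : ¬ Dom ε (ε ∘ Equiv.swap i₀ j₀) := by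
  intro h
  have h1 := h i₀ (ε i₀)
  rw [C_comp_swap_self i₀ j₀ hj, C_eq_Cs_add] at h1
  have h2 : ¬ (ε i₀ ≤ ε j₀) := not_le.mpr hd
  simp [h2] at h1

lemma dom_lift (hj : (j₀ : ℕ) = (i₀ : ℕ) + 1) (ε : Fin m → Fin N)
    (hd : ε j₀ < ε i₀) {ε' : Fin m → Fin N} (h : Dom ε' (ε ∘ Equiv.swap i₀ j₀)) :
    Dom (ε' ∘ Equiv.swap i₀ j₀) ε := by
  intro kk r
  rcases eq_or_ne kk i₀ with heq | hkk
  · subst kk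
    -- reduce everything to Cs at i₀ plus indicators
    have h3 : Cs ε' i₀ r ≤ Cs ε i₀ r := by
      by_cases h0 : (i₀ : ℕ) = 0
      · have e1 : Cs ε' i₀ r = 0 := by
          unfold Cs
          refine Finset.sum_eq_zero fun j _ => ?_
          have : ¬ j < i₀ := by rw [fin_lt_iff]; omega
          simp [this]
        have e2 : Cs ε i₀ r = 0 := by
          unfold Cs
          refine Finset.sum_eq_zero fun j _ => ?_
          have : ¬ j < i₀ := by rw [fin_lt_iff]; omega
          simp [this]
        omega
      · have h1 : (i₀ : ℕ) - 1 < m := by have := i₀.isLt; omega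
        rw [Cs_eq_C_pred i₀ ε' r h0 h1, Cs_eq_C_pred i₀ ε r h0 h1]
        have hne : (⟨(i₀ : ℕ) - 1, h1⟩ : Fin m) ≠ i₀ := by
          intro hcon
          have := congrArg Fin.val hcon
          simp at this; omega
        have := h ⟨(i₀ : ℕ) - 1, h1⟩ r
        rwa [C_comp_swap i₀ j₀ hj ε hne] at this
    have h1 := h i₀ r
    have h2 := h j₀ r
    rw [C_eq_Cs_add ε' i₀ r, C_comp_swap_self i₀ j₀ hj ε r] at h1
    rw [C_eq_Cs_add ε' j₀ r, Cs_j₀_eq_C_i₀ i₀ j₀ hj ε' r, C_eq_Cs_add ε' i₀ r,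
      C_eq_Cs_add (ε ∘ Equiv.swap i₀ j₀) j₀ r, Cs_j₀_eq_C_i₀ i₀ j₀ hj _ r,
      C_comp_swap_self i₀ j₀ hj ε r] at h2
    simp only [Function.comp_apply, Equiv.swap_apply_right] at h2
    rw [C_comp_swap_self i₀ j₀ hj ε' r, C_eq_Cs_add ε i₀ r]
    have himp : r ≤ ε j₀ → r ≤ ε i₀ := fun hh => hh.trans hd.le
    split_ifs at h1 h2 ⊢ <;> first | omega | exact absurd (himp (by assumption)) (by assumption)
  · rw [C_comp_swap i₀ j₀ hj ε' hkk]
    have := h kk r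
    rwa [C_comp_swap i₀ j₀ hj ε hkk] at this

end Swap
section Perm

variable {N m : ℕ}

lemma hasContent_comp {ε : Fin m → Fin N} {k : Fin N → ℕ} (σ : Equiv.Perm (Fin m))
    (h : hasContent ε k) : hasContent (ε ∘ σ) k := by
  intro r
  rw [← h r, Finset.card_filter, Finset.card_filter]
  calc (∑ a : Fin m, if (ε ∘ σ) a = r then 1 else 0)
      = ∑ a : Fin m, (fun b => if ε b = r then 1 else 0) (σ a) := by
        refine Finset.sum_congr rfl fun a _ => ?_; rfl
    _ = ∑ a : Fin m, if ε a = r then 1 else 0 :=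
        Equiv.sum_comp σ (fun b => if ε b = r then 1 else 0)

lemma exists_descent {ε : Fin m → Fin N} (hmono : ¬ Monotone ε) :
    ∃ (i : Fin m) (h : (i : ℕ) + 1 < m), ε ⟨(i : ℕ) + 1, h⟩ < ε i := by
  by_contra hc
  push_neg at hc
  apply hmono
  have step : ∀ t : ℕ, ∀ (p : Fin m) (h : (p : ℕ) + t < m), ε p ≤ ε ⟨(p : ℕ) + t, h⟩ := by
    intro t
    induction t with
    | zero => intro p h; exact le_of_eq (congrArg ε (Fin.ext (by simp)))
    | succ t ih =>
      intro p h
      have h' : (p : ℕ) + t < m := by omega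
      have h1 := ih p h'
      have h2 := hc ⟨(p : ℕ) + t, h'⟩ (by show (p : ℕ) + t + 1 < m; omega)
      refine h1.trans (le_of_le_of_eq h2 (congrArg ε (Fin.ext ?_)))
      simp; omega
  intro p s hps
  have hps' : (p : ℕ) ≤ (s : ℕ) := hps
  have h : (p : ℕ) + ((s : ℕ) - (p : ℕ)) < m := by have := s.isLt; omega
  have hs : (⟨(p : ℕ) + ((s : ℕ) - (p : ℕ)), h⟩ : Fin m) = s := Fin.ext (by simp; omega)
  have := step ((s : ℕ) - (p : ℕ)) p h
  rwa [hs] at this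

lemma swap_val_eq (i₀ j₀ x : Fin m) :
    ((Equiv.swap i₀ j₀ x : Fin m) : ℕ)
      = if (x : ℕ) = (i₀ : ℕ) then (j₀ : ℕ) else if (x : ℕ) = (j₀ : ℕ) then (i₀ : ℕ)
        else (x : ℕ) := by
  rcases eq_or_ne x i₀ with h | h1
  · rw [h, Equiv.swap_apply_left]; simp
  rcases eq_or_ne x j₀ with h | h2
  · rw [h, Equiv.swap_apply_right]
    have : (x : ℕ) ≠ (i₀ : ℕ) := fun hc => h1 (Fin.ext hc)
    rw [h] at this
    simp [this]
  · have e1 : (x : ℕ) ≠ (i₀ : ℕ) := fun hc => h1 (Fin.ext hc)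
    have e2 : (x : ℕ) ≠ (j₀ : ℕ) := fun hc => h2 (Fin.ext hc)
    rw [Equiv.swap_apply_of_ne_of_ne h1 h2]
    simp [e1, e2]

lemma swap_lt_iff {i₀ j₀ : Fin m} (hj : (j₀ : ℕ) = (i₀ : ℕ) + 1) {p t : Fin m}
    (h1 : ¬((p : ℕ) = (i₀ : ℕ) ∧ (t : ℕ) = (j₀ : ℕ)))
    (h2 : ¬((p : ℕ) = (j₀ : ℕ) ∧ (t : ℕ) = (i₀ : ℕ))) :
    (Equiv.swap i₀ j₀ p < Equiv.swap i₀ j₀ t ↔ p < t) := by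
  rw [fin_lt_iff, fin_lt_iff, swap_val_eq, swap_val_eq]
  split_ifs <;> omega

lemma inv_comp_swap {i₀ j₀ : Fin m} (hj : (j₀ : ℕ) = (i₀ : ℕ) + 1) (ε : Fin m → Fin N)
    (hd : ε j₀ < ε i₀) : inv ε = inv (ε ∘ Equiv.swap i₀ j₀) + 1 := by
  have hswap : ∀ x : Fin m, Equiv.swap i₀ j₀ (Equiv.swap i₀ j₀ x) = x := fun x =>
    Equiv.swap_apply_self i₀ j₀ x
  have hre : inv (ε ∘ Equiv.swap i₀ j₀)
      = ∑ p : Fin m × Fin m,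
          if Equiv.swap i₀ j₀ p.1 < Equiv.swap i₀ j₀ p.2 ∧ ε p.2 < ε p.1 then 1 else 0 := by
    unfold inv
    rw [← Equiv.sum_comp (Equiv.prodCongr (Equiv.swap i₀ j₀) (Equiv.swap i₀ j₀))
      (fun p : Fin m × Fin m =>
        if Equiv.swap i₀ j₀ p.1 < Equiv.swap i₀ j₀ p.2 ∧ ε p.2 < ε p.1 then 1 else 0)]
    refine Finset.sum_congr rfl fun p _ => ?_
    simp only [Equiv.prodCongr_apply, Prod.map, Function.comp_apply, hswap]
  rw [hre]
  unfold inv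
  rw [← Finset.add_sum_erase _ _ (Finset.mem_univ ((i₀, j₀) : Fin m × Fin m)),
    ← Finset.add_sum_erase _
      (fun p : Fin m × Fin m =>
        if Equiv.swap i₀ j₀ p.1 < Equiv.swap i₀ j₀ p.2 ∧ ε p.2 < ε p.1 then 1 else 0)
      (Finset.mem_univ ((i₀, j₀) : Fin m × Fin m))]
  have hij : i₀ < j₀ := by rw [fin_lt_iff]; omega
  have e1 : (if (i₀, j₀).1 < (i₀, j₀).2 ∧ ε (i₀, j₀).2 < ε (i₀, j₀).1 then 1 else 0) = 1 := by
    simp [hij, hd]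
  have e2 : (if Equiv.swap i₀ j₀ (i₀, j₀).1 < Equiv.swap i₀ j₀ (i₀, j₀).2
      ∧ ε (i₀, j₀).2 < ε (i₀, j₀).1 then 1 else 0) = 0 := by
    rw [Equiv.swap_apply_left, Equiv.swap_apply_right]
    simp [not_lt.mpr hij.le]
  rw [e1, e2]
  have hrest : ∀ p ∈ Finset.univ.erase ((i₀, j₀) : Fin m × Fin m),
      (if p.1 < p.2 ∧ ε p.2 < ε p.1 then 1 else 0)
        = (if Equiv.swap i₀ j₀ p.1 < Equiv.swap i₀ j₀ p.2 ∧ ε p.2 < ε p.1 then 1 else 0) := by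
    intro p hp
    have hne : p ≠ (i₀, j₀) := (Finset.mem_erase.mp hp).1
    by_cases hc : (p.1 : ℕ) = (j₀ : ℕ) ∧ (p.2 : ℕ) = (i₀ : ℕ)
    · have hp1 : p.1 = j₀ := Fin.ext hc.1
      have hp2 : p.2 = i₀ := Fin.ext hc.2
      have hεf : ¬ (ε p.2 < ε p.1) := by rw [hp1, hp2]; exact not_lt.mpr hd.le
      simp [hεf]
    · have hc2 : ¬((p.1 : ℕ) = (i₀ : ℕ) ∧ (p.2 : ℕ) = (j₀ : ℕ)) := by
        intro hcc
        exact hne (Prod.ext (Fin.ext hcc.1) (Fin.ext hcc.2))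
      rw [if_congr (and_congr_left' (swap_lt_iff hj hc2 hc)) rfl rfl]
  rw [Finset.sum_congr rfl hrest]
  omega

end Perm
section ProdSort

variable {N m : ℕ}

lemma prodA_monotone (q : ℂ) {ε : Fin m → Fin N} (hm : Monotone ε) (ζ : Fin m → ℂ) :
    (∏ p : Fin m, ∏ t : Fin m,
      if p < t ∧ ε t < ε p then a1Fun N q (ζ p / ζ t) else 1) = 1 := by
  refine Finset.prod_eq_one fun p _ => Finset.prod_eq_one fun t _ => ?_
  have : ¬ (p < t ∧ ε t < ε p) := by
    rintro ⟨h1, h2⟩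
    exact absurd (hm h1.le) (not_le.mpr h2)
  simp [this]

lemma prodA_swap (q : ℂ) {i₀ j₀ : Fin m} (hj : (j₀ : ℕ) = (i₀ : ℕ) + 1) (ε : Fin m → Fin N)
    (hd : ε j₀ < ε i₀) (ζ : Fin m → ℂ) :
    (∏ p : Fin m, ∏ t : Fin m, if p < t ∧ ε t < ε p then a1Fun N q (ζ p / ζ t) else 1)
      = a1Fun N q (ζ i₀ / ζ j₀) *
        ∏ p : Fin m, ∏ t : Fin m,
          if p < t ∧ (ε ∘ Equiv.swap i₀ j₀) t < (ε ∘ Equiv.swap i₀ j₀) p then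
            a1Fun N q ((ζ ∘ Equiv.swap i₀ j₀) p / (ζ ∘ Equiv.swap i₀ j₀) t) else 1 := by
  have hswap : ∀ x : Fin m, Equiv.swap i₀ j₀ (Equiv.swap i₀ j₀ x) = x := fun x =>
    Equiv.swap_apply_self i₀ j₀ x
  have hP : ∀ (F : Fin m → Fin m → ℂ), (∏ p : Fin m, ∏ t : Fin m, F p t)
      = ∏ p : Fin m × Fin m, F p.1 p.2 := by
    intro F
    rw [← Finset.prod_product', Finset.univ_product_univ]
  rw [hP, hP]
  have hre : (∏ p : Fin m × Fin m,
        if p.1 < p.2 ∧ (ε ∘ Equiv.swap i₀ j₀) p.2 < (ε ∘ Equiv.swap i₀ j₀) p.1 then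
          a1Fun N q ((ζ ∘ Equiv.swap i₀ j₀) p.1 / (ζ ∘ Equiv.swap i₀ j₀) p.2) else 1)
      = ∏ p : Fin m × Fin m,
        if Equiv.swap i₀ j₀ p.1 < Equiv.swap i₀ j₀ p.2 ∧ ε p.2 < ε p.1 then
          a1Fun N q (ζ p.1 / ζ p.2) else 1 := by
    rw [← Equiv.prod_comp (Equiv.prodCongr (Equiv.swap i₀ j₀) (Equiv.swap i₀ j₀))
      (fun p : Fin m × Fin m =>
        if Equiv.swap i₀ j₀ p.1 < Equiv.swap i₀ j₀ p.2 ∧ ε p.2 < ε p.1 then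
          a1Fun N q (ζ p.1 / ζ p.2) else 1)]
    refine Finset.prod_congr rfl fun p _ => ?_
    simp only [Equiv.prodCongr_apply, Prod.map, Function.comp_apply, hswap]
  rw [hre]
  rw [← Finset.mul_prod_erase _ _ (Finset.mem_univ ((i₀, j₀) : Fin m × Fin m)),
    ← Finset.mul_prod_erase _
      (fun p : Fin m × Fin m =>
        if Equiv.swap i₀ j₀ p.1 < Equiv.swap i₀ j₀ p.2 ∧ ε p.2 < ε p.1 then
          a1Fun N q (ζ p.1 / ζ p.2) else 1)
      (Finset.mem_univ ((i₀, j₀) : Fin m × Fin m))]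
  have hij : i₀ < j₀ := by rw [fin_lt_iff]; omega
  have e1 : (if (i₀, j₀).1 < (i₀, j₀).2 ∧ ε (i₀, j₀).2 < ε (i₀, j₀).1 then
      a1Fun N q (ζ (i₀, j₀).1 / ζ (i₀, j₀).2) else 1) = a1Fun N q (ζ i₀ / ζ j₀) := by
    simp [hij, hd]
  have e2 : (if Equiv.swap i₀ j₀ (i₀, j₀).1 < Equiv.swap i₀ j₀ (i₀, j₀).2
      ∧ ε (i₀, j₀).2 < ε (i₀, j₀).1 then a1Fun N q (ζ (i₀, j₀).1 / ζ (i₀, j₀).2) else 1)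
      = 1 := by
    rw [Equiv.swap_apply_left, Equiv.swap_apply_right]
    simp [not_lt.mpr hij.le]
  rw [e1, e2, one_mul]
  congr 1
  refine Finset.prod_congr rfl fun p hp => ?_
  have hne : p ≠ (i₀, j₀) := (Finset.mem_erase.mp hp).1
  by_cases hc : (p.1 : ℕ) = (j₀ : ℕ) ∧ (p.2 : ℕ) = (i₀ : ℕ)
  · have hp1 : p.1 = j₀ := Fin.ext hc.1
    have hp2 : p.2 = i₀ := Fin.ext hc.2
    have hεf : ¬ (ε p.2 < ε p.1) := by rw [hp1, hp2]; exact not_lt.mpr hd.le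
    simp [hεf]
  · have hc2 : ¬((p.1 : ℕ) = (i₀ : ℕ) ∧ (p.2 : ℕ) = (j₀ : ℕ)) := by
      intro hcc
      exact hne (Prod.ext (Fin.ext hcc.1) (Fin.ext hcc.2))
    rw [if_congr (and_congr_left' (swap_lt_iff hj hc2 hc)) rfl rfl]

lemma update_comp_swap {α : Type*} (ε : Fin m → α) {i₀ j₀ : Fin m} (hne : i₀ ≠ j₀) :
    Function.update (Function.update ε i₀ (ε j₀)) j₀ (ε i₀)
      = fun t => ε (Equiv.swap i₀ j₀ t) := by
  funext t
  rcases eq_or_ne t j₀ with h | h2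
  · rw [h, Function.update_self, Equiv.swap_apply_right]
  rcases eq_or_ne t i₀ with h | h1
  · rw [h, Function.update_of_ne hne, Function.update_self, Equiv.swap_apply_left]
  · rw [Function.update_of_ne h2, Function.update_of_ne h1,
      Equiv.swap_apply_of_ne_of_ne h1 h2]

lemma update_update_self {α : Type*} (ε : Fin m → α) (u v : Fin m) :
    Function.update (Function.update ε u (ε u)) v (ε v) = ε := by
  rw [Function.update_eq_self]
  exact Function.update_eq_self v ε

lemma sort_stab (ε' : Fin m → Fin N) :
    ∀ a b, a < b → ε' (Tuple.sort ε' a) = ε' (Tuple.sort ε' b)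
      → Tuple.sort ε' a < Tuple.sort ε' b :=
  fun a b hab heq => ((Tuple.eq_sort_iff.mp rfl).2) a b hab heq

lemma sort_comp_swap {i₀ j₀ : Fin m} (hj : (j₀ : ℕ) = (i₀ : ℕ) + 1)
    (ε' : Fin m → Fin N) (hne : ε' i₀ ≠ ε' j₀) :
    Tuple.sort (ε' ∘ Equiv.swap i₀ j₀) = (Tuple.sort ε').trans (Equiv.swap i₀ j₀) := by
  have hswap : ∀ x : Fin m, Equiv.swap i₀ j₀ (Equiv.swap i₀ j₀ x) = x := fun x =>
    Equiv.swap_apply_self i₀ j₀ x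
  symm
  rw [Tuple.eq_sort_iff]
  constructor
  · have hcomp : (ε' ∘ Equiv.swap i₀ j₀) ∘ ((Tuple.sort ε').trans (Equiv.swap i₀ j₀))
        = ε' ∘ Tuple.sort ε' := by
      funext t
      simp [hswap]
    rw [hcomp]
    exact Tuple.monotone_sort ε'
  · intro a b hab heq
    simp only [Equiv.trans_apply, Function.comp_apply, hswap] at heq ⊢
    have hlt := sort_stab ε' a b hab heq
    set x := Tuple.sort ε' a with hx
    set y := Tuple.sort ε' b with hy
    -- x < y, ε' x = ε' y, show swap x < swap y
    have hxyne : ¬ ((x : ℕ) = (i₀ : ℕ) ∧ (y : ℕ) = (j₀ : ℕ)) := by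
      rintro ⟨hh1, hh2⟩
      exact hne (by rw [← Fin.ext hh1, ← Fin.ext hh2]; exact heq)
    have hxyne' : ¬ ((x : ℕ) = (j₀ : ℕ) ∧ (y : ℕ) = (i₀ : ℕ)) := by
      rintro ⟨hh1, hh2⟩
      have : j₀ < i₀ := by rw [← Fin.ext hh1, ← Fin.ext hh2]; exact hlt
      rw [fin_lt_iff] at this; omega
    exact (swap_lt_iff hj hxyne hxyne').mpr hlt

lemma sort_swap_adjacent {i₀ j₀ : Fin m} (hj : (j₀ : ℕ) = (i₀ : ℕ) + 1)
    (ε' : Fin m → Fin N) (heq : ε' i₀ = ε' j₀) :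
    ∃ u v : Fin m, (v : ℕ) = (u : ℕ) + 1 ∧ Tuple.sort ε' u = i₀ ∧ Tuple.sort ε' v = j₀ ∧
      ∀ t, Equiv.swap i₀ j₀ (Tuple.sort ε' t) = Tuple.sort ε' (Equiv.swap u v t) := by
  set σ := Tuple.sort ε' with hσ
  have hij : i₀ < j₀ := by rw [fin_lt_iff]; omega
  have hijne : i₀ ≠ j₀ := ne_of_lt hij
  refine ⟨σ.symm i₀, σ.symm j₀, ?_, Equiv.apply_symm_apply σ i₀, Equiv.apply_symm_apply σ j₀, ?_⟩
  · set u := σ.symm i₀ with hu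
    set v := σ.symm j₀ with hv
    have hσu : σ u = i₀ := Equiv.apply_symm_apply σ i₀
    have hσv : σ v = j₀ := Equiv.apply_symm_apply σ j₀
    have hmono : Monotone (ε' ∘ σ) := Tuple.monotone_sort ε'
    have hvals : ε' (σ u) = ε' (σ v) := by rw [hσu, hσv, heq]
    have huv : u < v := by
      rcases lt_trichotomy u v with h | h | h
      · exact h
      · exfalso; apply hijne; rw [← hσu, ← hσv, h]
      · exfalso
        have := sort_stab ε' v u h hvals.symm
        rw [hσu, hσv] at this
        exact absurd this (not_lt.mpr hij.le)
    by_contra hadj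
    have hw : (u : ℕ) + 1 < m := by
      have := v.isLt
      have := huv
      rw [fin_lt_iff] at this
      omega
    set w : Fin m := ⟨(u : ℕ) + 1, hw⟩ with hwdef
    have huw : u < w := by rw [fin_lt_iff]; simp [hwdef]
    have hwv : w < v := by
      rw [fin_lt_iff] at huv ⊢
      simp only [hwdef]
      omega
    have e1 : ε' (σ u) ≤ ε' (σ w) := hmono huw.le
    have e2 : ε' (σ w) ≤ ε' (σ v) := hmono hwv.le
    have e3 : ε' (σ u) = ε' (σ w) := le_antisymm e1 (by rw [hvals]; exact e2)
    have l1 := sort_stab ε' u w huw e3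
    have l2 := sort_stab ε' w v hwv (by rw [← e3, hvals])
    rw [hσu] at l1
    rw [hσv] at l2
    rw [fin_lt_iff] at l1 l2
    omega
  · intro t
    set u := σ.symm i₀ with hu
    set v := σ.symm j₀ with hv
    rcases eq_or_ne t u with h | h2
    · rw [h, Equiv.swap_apply_left, Equiv.apply_symm_apply, Equiv.swap_apply_left,
        Equiv.apply_symm_apply]
    rcases eq_or_ne t v with h | h3
    · rw [h, Equiv.swap_apply_right, Equiv.apply_symm_apply, Equiv.swap_apply_right,
        Equiv.apply_symm_apply]
    · rw [Equiv.swap_apply_of_ne_of_ne h2 h3, Equiv.swap_apply_of_ne_of_ne]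
      · intro hc; apply h2; rw [hu]; rw [← hc]; exact (Equiv.symm_apply_apply σ t).symm
      · intro hc; apply h3; rw [hv]; rw [← hc]; exact (Equiv.symm_apply_apply σ t).symm

end ProdSort

lemma update_update_self' {m : ℕ} {α : Type*} (e : Fin m → α) (u v : Fin m)
    (h : e u = e v) :
    Function.update (Function.update e u (e u)) v (e u) = e := by
  rw [Function.update_eq_self, h]
  exact Function.update_eq_self v e
section MinSeq

variable {N m : ℕ}

lemma monotone_content_eq_minSeq (hN : 0 < N) (k : Fin N → ℕ) (ε : Fin m → Fin N)
    (hc : hasContent ε k) (hm : Monotone ε) : ε = minSeq N m hN k := by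
  funext a
  have hcard : ∀ r : Fin N, (Finset.univ.filter fun j => ε j ≤ r).card
      = ∑ r' ∈ Finset.Iic r, k r' := by
    intro r
    have hset : (Finset.univ.filter fun j => ε j ≤ r)
        = (Finset.Iic r).biUnion fun r' => Finset.univ.filter fun j => ε j = r' := by
      ext j
      simp only [Finset.mem_filter, Finset.mem_biUnion, Finset.mem_univ, true_and,
        Finset.mem_Iic]
      constructor
      · intro h; exact ⟨ε j, h, rfl⟩
      · rintro ⟨r', hr', h⟩; rw [h]; exact hr'
    rw [hset, Finset.card_biUnion]
    · exact Finset.sum_congr rfl fun r' _ => hc r'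
    · intro x _ y _ hxy
      simp only [Finset.disjoint_filter]
      intro j _ hx hy
      exact hxy (hx ▸ hy ▸ rfl)
  have hiff : ∀ r : Fin N, ε a ≤ r ↔ (a : ℕ) < ∑ r' ∈ Finset.Iic r, k r' := by
    intro r
    constructor
    · intro h
      have hsub : Finset.Iic a ⊆ Finset.univ.filter fun j => ε j ≤ r := by
        intro j hja
        simp only [Finset.mem_Iic] at hja
        simp only [Finset.mem_filter, Finset.mem_univ, true_and]
        exact (hm hja).trans h
      have := Finset.card_le_card hsub
      rw [Fin.card_Iic, hcard r] at this
      omega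
    · intro h
      by_contra hcon
      have hr : r < ε a := not_le.mp hcon
      have hsub : (Finset.univ.filter fun j => ε j ≤ r) ⊆ Finset.Iio a := by
        intro j hjmem
        simp only [Finset.mem_filter, Finset.mem_univ, true_and] at hjmem
        simp only [Finset.mem_Iio]
        by_contra hja
        exact absurd ((hm (not_lt.mp hja)).trans hjmem) (not_le.mpr hr)
      have := Finset.card_le_card hsub
      rw [Fin.card_Iio, hcard r] at this
      omega
  have hfin : (Finset.univ.filter fun r : Fin N => (∑ r' ∈ Finset.Iic r, k r') ≤ (a : ℕ))
      = Finset.univ.filter fun r : Fin N => r < ε a := by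
    ext r
    simp only [Finset.mem_filter, Finset.mem_univ, true_and]
    constructor
    · intro h
      by_contra h2
      exact absurd ((hiff r).mp (not_lt.mp h2)) (not_lt.mpr h)
    · intro h
      by_contra h2
      exact absurd ((hiff r).mpr (not_le.mp h2)) (not_le.mpr h)
  have hcard2 : (Finset.univ.filter fun r : Fin N => r < ε a).card = (ε a : ℕ) := by
    have : (Finset.univ.filter fun r : Fin N => r < ε a) = Finset.Iio (ε a) := by
      ext r; simp
    rw [this, Fin.card_Iio]
  unfold minSeq
  apply Fin.ext
  show (ε a : ℕ)
    = (Finset.univ.filter fun r : Fin N => (∑ r' ∈ Finset.Iic r, k r') ≤ (a : ℕ)).card % N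
  rw [hfin, hcard2, Nat.mod_eq_of_lt (ε a).isLt]

lemma content_sort_eq_minSeq (hN : 0 < N) (k : Fin N → ℕ) (ε' : Fin m → Fin N)
    (hc : hasContent ε' k) : ε' ∘ Tuple.sort ε' = minSeq N m hN k :=
  monotone_content_eq_minSeq hN k _ (hasContent_comp (Tuple.sort ε') hc)
    (Tuple.monotone_sort ε')

/-- minimality of the minimal sequence: a content-`k` sequence lex-below a monotone
content-`k` sequence equals it. -/
lemma lexLE_monotone_eq (k : Fin N → ℕ) {ε' ε : Fin m → Fin N} (hc' : hasContent ε' k)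
    (hc : hasContent ε k) (hm : Monotone ε) (hle : lexLE ε' ε) : ε' = ε := by
  rcases hle with h | ⟨i, hpre, hlt⟩
  · exact h
  exfalso
  set v := ε' i with hv
  -- count of values ≤ v in ε and ε'
  have hcount : ∀ (ε₁ : Fin m → Fin N), hasContent ε₁ k →
      (Finset.univ.filter fun j => ε₁ j ≤ v).card = ∑ r' ∈ Finset.Iic v, k r' := by
    intro ε₁ hc₁
    have hset : (Finset.univ.filter fun j => ε₁ j ≤ v)
        = (Finset.Iic v).biUnion fun r' => Finset.univ.filter fun j => ε₁ j = r' := by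
      ext j
      simp only [Finset.mem_filter, Finset.mem_biUnion, Finset.mem_univ, true_and,
        Finset.mem_Iic]
      constructor
      · intro h; exact ⟨ε₁ j, h, rfl⟩
      · rintro ⟨r', hr', h⟩; rw [h]; exact hr'
    rw [hset, Finset.card_biUnion]
    · exact Finset.sum_congr rfl fun r' _ => hc₁ r'
    · intro x _ y _ hxy
      simp only [Finset.disjoint_filter]
      intro j _ hx hy
      exact hxy (hx ▸ hy ▸ rfl)
  -- in ε, all positions with value ≤ v lie strictly below i
  have hsub : (Finset.univ.filter fun j => ε j ≤ v) ⊆ Finset.Iio i := by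
    intro j hj
    simp only [Finset.mem_filter, Finset.mem_univ, true_and] at hj
    simp only [Finset.mem_Iio]
    by_contra hji
    exact absurd ((hm (not_lt.mp hji)).trans hj) (not_le.mpr hlt)
  -- but in ε', positions strictly below i with value ≤ v match those of ε, plus i itself
  have hsub' : insert i ((Finset.univ.filter fun j => ε j ≤ v) )
      ⊆ (Finset.univ.filter fun j => ε' j ≤ v) := by
    intro j hj
    rcases Finset.mem_insert.mp hj with h | h
    · subst h; simp only [Finset.mem_filter, Finset.mem_univ, true_and]; exact le_rfl
    · have hji := hsub h
      simp only [Finset.mem_Iio] at hji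
      simp only [Finset.mem_filter, Finset.mem_univ, true_and] at h ⊢
      rw [hpre j hji]; exact h
  have hnotmem : i ∉ (Finset.univ.filter fun j => ε j ≤ v) := by
    intro h
    exact absurd (hsub h) (by simp)
  have hcardle := Finset.card_le_card hsub'
  rw [Finset.card_insert_of_notMem hnotmem, hcount ε hc, hcount ε' hc'] at hcardle
  omega

end MinSeq
section Field

lemma bFun_ne_zero {N : ℕ} (hN : 2 ≤ N) {q z : ℂ} (hq : q ≠ 0) (hz1 : z ^ N ≠ 1)
    (hz2 : q ^ 2 * z ^ N ≠ 1) : bFun N q z ≠ 0 := by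
  unfold bFun
  apply div_ne_zero
  · exact mul_ne_zero hq (sub_ne_zero.mpr (Ne.symm hz1))
  · exact sub_ne_zero.mpr fun h => hz2 h.symm

lemma bInv_mul_rPowInv (N : ℕ) (hN : 2 ≤ N) (q : ℂ) (hq : q ≠ 0) (x y : ℂ) :
    (bFun N q (x / y))⁻¹ * (((y / x) ^ (N - 1) : ℂ))⁻¹ = a1Fun N q (x / y) := by
  have hN1 : N - 1 ≠ 0 := by omega
  have hNn : N ≠ 0 := by omega
  rcases eq_or_ne x 0 with rfl | hx
  · rw [zero_div]
    unfold a1Fun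
    rw [div_zero, zero_pow hN1, inv_zero, mul_zero]
    ring
  rcases eq_or_ne y 0 with rfl | hy
  · rw [div_zero, zero_div, zero_pow hN1, inv_zero, mul_zero]
    unfold a1Fun
    rw [zero_pow hN1]
    ring
  have hz : x / y ≠ 0 := div_ne_zero hx hy
  have hyx : y / x = (x / y)⁻¹ := by field_simp
  rw [hyx, ← inv_pow, inv_inv]
  set z := x / y with hzdef
  unfold bFun a1Fun
  rcases eq_or_ne (z ^ N) 1 with h1 | h1
  · rw [h1, sub_self, mul_zero, zero_div, inv_zero, zero_mul, div_zero]
  rcases eq_or_ne (q ^ 2 * z ^ N) 1 with h2 | h2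
  · rw [h2, sub_self, div_zero, inv_zero, zero_mul, mul_zero, zero_div]
  have d1 : (1 : ℂ) - z ^ N ≠ 0 := sub_ne_zero.mpr (Ne.symm h1)
  have d2 : (1 : ℂ) - q ^ 2 * z ^ N ≠ 0 := sub_ne_zero.mpr (Ne.symm h2)
  field_simp

end Field
section Main

/-- the exchange relations, exactly as in the theorem statement -/
def ExchRel (N : ℕ) (q : ℂ) (m n : ℕ)
    (g : (Fin m → ℂ) → (Fin n → ℂ) → (Fin m → Fin N) → (Fin n → Fin N) → ℂ) : Prop :=
  ∀ (ζ : Fin m → ℂ) (ξ : Fin n → ℂ), (∀ t, ζ t ≠ 0) → (∀ t, ξ t ≠ 0) →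
    ∀ (i : Fin m) (hi : (i : ℕ) + 1 < m) (ε : Fin m → Fin N) (μ : Fin n → Fin N)
      (α β : Fin N),
      (α ≠ β →
        g (fun t => ζ (Equiv.swap i ⟨(i : ℕ) + 1, hi⟩ t)) ξ
            (Function.update (Function.update ε i α) ⟨(i : ℕ) + 1, hi⟩ β) μ
          = (ζ ⟨(i : ℕ) + 1, hi⟩ / ζ i) ^ (N - 1)
            * (bFun N q (ζ i / ζ ⟨(i : ℕ) + 1, hi⟩)
                  * g ζ ξ (Function.update (Function.update ε i β)
                      ⟨(i : ℕ) + 1, hi⟩ α) μ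
                + cFun N q α β (ζ i / ζ ⟨(i : ℕ) + 1, hi⟩)
                  * g ζ ξ (Function.update (Function.update ε i α)
                      ⟨(i : ℕ) + 1, hi⟩ β) μ))
      ∧ g (fun t => ζ (Equiv.swap i ⟨(i : ℕ) + 1, hi⟩ t)) ξ
            (Function.update (Function.update ε i α) ⟨(i : ℕ) + 1, hi⟩ α) μ
          = (ζ ⟨(i : ℕ) + 1, hi⟩ / ζ i) ^ (N - 1)
            * g ζ ξ (Function.update (Function.update ε i α)
                ⟨(i : ℕ) + 1, hi⟩ α) μ

/-- the three properties of the row of coefficients attached to `ε` -/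
def Good (N m n : ℕ) (q : ℂ) (k : Fin N → ℕ) (hN : 0 < N)
    (row : (Fin m → Fin N) → (Fin m → ℂ) → ℂ) (ε : Fin m → Fin N) : Prop :=
  (∀ ζ : Fin m → ℂ, row ε ζ = ∏ p : Fin m, ∏ s : Fin m,
      if p < s ∧ ε s < ε p then a1Fun N q (ζ p / ζ s) else 1)
  ∧ (∀ (ε' : Fin m → Fin N) (ζ : Fin m → ℂ), row ε' ζ ≠ 0 → hasContent ε' k ∧ Dom ε' ε)
  ∧ ∀ g, ExchRel N q m n g →
      ∀ (ζ : Fin m → ℂ) (ξ : Fin n → ℂ), (∀ t, ζ t ≠ 0) → (∀ t, ξ t ≠ 0) →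
        (∀ p s : Fin m, p ≠ s → ζ p ^ N ≠ ζ s ^ N) →
        (∀ p s : Fin m, p ≠ s → q ^ 2 * (ζ p / ζ s) ^ N ≠ 1) →
        ∀ μ : Fin n → Fin N,
          g ζ ξ ε μ = ∑ ε' : Fin m → Fin N,
            row ε' ζ * g (fun t => ζ (Tuple.sort ε' t)) ξ (minSeq N m hN k) μ

lemma main (N : ℕ) (hN : 2 ≤ N) (q : ℂ) (hq : q ≠ 0) (m n : ℕ) (k : Fin N → ℕ)
    (hN0 : 0 < N) : ∀ d : ℕ, ∃ a : (Fin m → Fin N) → (Fin m → Fin N) → (Fin m → ℂ) → ℂ,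
    ∀ ε, hasContent ε k → inv ε < d → Good N m n q k hN0 (a ε) ε := by
  intro d
  induction d with
  | zero => exact ⟨fun _ _ _ => 0, fun ε _ h => absurd h (by omega)⟩
  | succ d ih =>
    classical
    obtain ⟨a0, h0⟩ := ih
    set a : (Fin m → Fin N) → (Fin m → Fin N) → (Fin m → ℂ) → ℂ := fun ε ε' ζ =>
      if hasContent ε k ∧ inv ε < d then a0 ε ε' ζ
      else if hm : Monotone ε then (if ε' = ε then 1 else 0)
      else
        (let i₀ := (exists_descent hm).choose
         let hlt := (exists_descent hm).choose_spec.choose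
         let j₀ : Fin m := ⟨(i₀ : ℕ) + 1, hlt⟩
         (bFun N q (ζ i₀ / ζ j₀))⁻¹ *
           ((((ζ j₀ / ζ i₀) ^ (N - 1))⁻¹) *
              (if ε' i₀ = ε' j₀ then
                a0 (ε ∘ Equiv.swap i₀ j₀) ε' (ζ ∘ Equiv.swap i₀ j₀)
                  * (ζ j₀ / ζ i₀) ^ (N - 1)
              else a0 (ε ∘ Equiv.swap i₀ j₀) (ε' ∘ Equiv.swap i₀ j₀) (ζ ∘ Equiv.swap i₀ j₀))
            - cFun N q (ε j₀) (ε i₀) (ζ i₀ / ζ j₀) * a0 (ε ∘ Equiv.swap i₀ j₀) ε' ζ))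
      with hadef
    refine ⟨a, ?_⟩
    intro ε hc hinv
    by_cases hcd : hasContent ε k ∧ inv ε < d
    · have hrow : a ε = a0 ε := by
        funext ε' ζ
        simp only [hadef, if_pos hcd]
      rw [hrow]
      exact h0 ε hcd.1 hcd.2
    have hinvd : ¬ inv ε < d := fun h => hcd ⟨hc, h⟩
    by_cases hm : Monotone ε
    · -- base case: ε is the minimal sequence
      have hrow : ∀ ε' ζ, a ε ε' ζ = if ε' = ε then 1 else 0 := by
        intro ε' ζ
        simp only [hadef, if_neg hcd, dif_pos hm]
      have hmin : ε = minSeq N m hN0 k := monotone_content_eq_minSeq hN0 k ε hc hm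
      refine ⟨?_, ?_, ?_⟩
      · intro ζ
        rw [hrow, if_pos rfl, prodA_monotone q hm ζ]
      · intro ε' ζ hne
        rw [hrow] at hne
        by_cases h : ε' = ε
        · subst h; exact ⟨hc, dom_refl ε'⟩
        · simp [h] at hne
      · intro g hg ζ ξ hζ hξ hdist hq2 μ
        have hsort : Tuple.sort ε = Equiv.refl (Fin m) :=
          Tuple.sort_eq_refl_iff_monotone.mpr hm
        rw [Finset.sum_eq_single ε]
        · rw [hrow, if_pos rfl, one_mul, hsort]
          simp only [Equiv.refl_apply]
          rw [← hmin]
        · intro ε' _ hne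
          rw [hrow, if_neg hne, zero_mul]
        · intro h
          exact absurd (Finset.mem_univ ε) h
    -- main inductive step
    · obtain ⟨hi₀lt, hdes⟩ := (exists_descent hm).choose_spec
      set i₀ : Fin m := (exists_descent hm).choose with hi₀
      set j₀ : Fin m := ⟨(i₀ : ℕ) + 1, hi₀lt⟩ with hj₀
      have hj : (j₀ : ℕ) = (i₀ : ℕ) + 1 := rfl
      have hij_ne : i₀ ≠ j₀ := by
        intro h
        have := congrArg Fin.val h
        rw [hj] at this; omega
      have hdes' : ε j₀ < ε i₀ := hdes
      set s : Equiv.Perm (Fin m) := Equiv.swap i₀ j₀ with hs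
      set εt : Fin m → Fin N := ε ∘ s with hεt
      have hrow : ∀ ε' ζ, a ε ε' ζ =
          (bFun N q (ζ i₀ / ζ j₀))⁻¹ *
           ((((ζ j₀ / ζ i₀) ^ (N - 1))⁻¹) *
              (if ε' i₀ = ε' j₀ then a0 εt ε' (ζ ∘ s) * (ζ j₀ / ζ i₀) ^ (N - 1)
               else a0 εt (ε' ∘ s) (ζ ∘ s))
            - cFun N q (ε j₀) (ε i₀) (ζ i₀ / ζ j₀) * a0 εt ε' ζ) := by
        intro ε' ζ
        simp only [hadef, if_neg hcd, dif_neg hm]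
        rfl
      have hct : hasContent εt k := hasContent_comp s hc
      have hinvt : inv εt < d := by
        have h1 : inv ε = inv εt + 1 := inv_comp_swap hj ε hdes'
        omega
      obtain ⟨ht_diag, ht_supp, ht_exp⟩ := h0 εt hct hinvt
      have hdomstep : Dom εt ε := dom_swap_of_descent i₀ j₀ hj ε hdes'
      have hss : ∀ x, s (s x) = x := fun x => Equiv.swap_apply_self i₀ j₀ x
      refine ⟨?_, ?_, ?_⟩
      · -- diagonal coefficient
        intro ζ
        rw [hrow]
        have hz : a0 εt ε ζ = 0 := by
          by_contra hz
          exact absurd (ht_supp ε ζ hz).2 (not_dom_of_descent i₀ j₀ hj ε hdes')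
        have hIF : ¬ (ε i₀ = ε j₀) := fun h => absurd h (ne_of_gt hdes')
        rw [if_neg hIF, hz, mul_zero, sub_zero, ht_diag (ζ ∘ s)]
        rw [prodA_swap q hj ε hdes' ζ]
        rw [← bInv_mul_rPowInv N hN q hq (ζ i₀) (ζ j₀)]
        ring
      · -- support
        intro ε' ζ hne
        rw [hrow] at hne
        by_contra hcon
        apply hne
        have z1 : a0 εt ε' (ζ ∘ s) = 0 := by
          by_contra hz
          obtain ⟨hc1, hd1⟩ := ht_supp ε' (ζ ∘ s) hz
          exact hcon ⟨hc1, dom_trans hd1 hdomstep⟩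
        have z2 : a0 εt ε' ζ = 0 := by
          by_contra hz
          obtain ⟨hc1, hd1⟩ := ht_supp ε' ζ hz
          exact hcon ⟨hc1, dom_trans hd1 hdomstep⟩
        have z3 : a0 εt (ε' ∘ s) (ζ ∘ s) = 0 := by
          by_contra hz
          obtain ⟨hc1, hd1⟩ := ht_supp (ε' ∘ s) (ζ ∘ s) hz
          have hcc : hasContent ε' k := by
            have := hasContent_comp s hc1
            have hee : (ε' ∘ s) ∘ s = ε' := by
              funext t; simp only [Function.comp_apply, hss]
            rwa [hee] at this
          have hdd : Dom ε' ε := by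
            have := dom_lift i₀ j₀ hj ε hdes' hd1
            have hee : (ε' ∘ s) ∘ s = ε' := by
              funext t; simp only [Function.comp_apply, hss]
            rwa [hee] at this
          exact hcon ⟨hcc, hdd⟩
        rw [z1, z2, z3]
        simp
      · -- expansion
        intro g hg ζ ξ hζ hξ hdist hq2 μ
        set ζt : Fin m → ℂ := ζ ∘ s with hζt
        have hζs : ∀ t, ζt t ≠ 0 := fun t => hζ (s t)
        have hdists : ∀ p t : Fin m, p ≠ t → ζt p ^ N ≠ ζt t ^ N := by
          intro p t hpt
          exact hdist (s p) (s t) fun h => hpt (s.injective h)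
        have hq2s : ∀ p t : Fin m, p ≠ t → q ^ 2 * (ζt p / ζt t) ^ N ≠ 1 := by
          intro p t hpt
          exact hq2 (s p) (s t) fun h => hpt (s.injective h)
        set b : ℂ := bFun N q (ζ i₀ / ζ j₀) with hbdef
        set c : ℂ := cFun N q (ε j₀) (ε i₀) (ζ i₀ / ζ j₀) with hcdef
        set R : ℂ := (ζ j₀ / ζ i₀) ^ (N - 1) with hRdef
        have hb : b ≠ 0 := by
          apply bFun_ne_zero hN hq
          · rw [div_pow]
            intro h
            have hj0 : ζ j₀ ^ N ≠ 0 := pow_ne_zero _ (hζ j₀)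
            rw [div_eq_one_iff_eq hj0] at h
            exact hdist i₀ j₀ hij_ne h
          · exact hq2 i₀ j₀ hij_ne
        have hR : R ≠ 0 := pow_ne_zero _ (div_ne_zero (hζ j₀) (hζ i₀))
        -- the basic exchange relation
        have hrel := (hg ζ ξ hζ hξ i₀ hi₀lt ε μ (ε j₀) (ε i₀)).1 (ne_of_lt hdes')
        have hupd1 : Function.update (Function.update ε i₀ (ε j₀)) j₀ (ε i₀)
            = fun t => ε (s t) := update_comp_swap ε hij_ne
        have hupd2 : Function.update (Function.update ε i₀ (ε i₀)) j₀ (ε j₀) = ε :=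
          update_update_self ε i₀ j₀
        rw [hupd1, hupd2] at hrel
        -- hrel : g ζt ξ εt μ = R * (b * g ζ ξ ε μ + c * g ζ ξ εt μ)
        have hζteq : (fun t => ζ (Equiv.swap i₀ j₀ t)) = ζt := rfl
        have hεteq : (fun t => ε (s t)) = εt := rfl
        rw [hζteq, hεteq] at hrel
        have hj₀' : (⟨(i₀ : ℕ) + 1, hi₀lt⟩ : Fin m) = j₀ := rfl
        rw [hj₀', ← hbdef, ← hcdef, ← hRdef] at hrel
        have hsolve : g ζ ξ ε μ
            = b⁻¹ * (R⁻¹ * g ζt ξ εt μ - c * g ζ ξ εt μ) := by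
          rw [hrel]
          have halg : ∀ X Y : ℂ, b⁻¹ * (R⁻¹ * (R * (b * X + c * Y)) - c * Y) = X := by
            intro X Y
            field_simp
            ring
          exact (halg _ _).symm
        have E1 := ht_exp g hg ζt ξ hζs hξ hdists hq2s μ
        have E2 := ht_exp g hg ζ ξ hζ hξ hdist hq2 μ
        -- transform the terms of E1
        have hterm : ∀ ε' : Fin m → Fin N,
            a0 εt ε' ζt * g (fun t => ζt (Tuple.sort ε' t)) ξ (minSeq N m hN0 k) μ
              = if ε' i₀ = ε' j₀ then
                  (a0 εt ε' ζt * R)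
                    * g (fun t => ζ (Tuple.sort ε' t)) ξ (minSeq N m hN0 k) μ
                else a0 εt ε' ζt
                    * g (fun t => ζ (Tuple.sort (ε' ∘ s) t)) ξ (minSeq N m hN0 k) μ
              := by
          intro ε'
          by_cases hP : ε' i₀ = ε' j₀
          · rw [if_pos hP]
            by_cases hz : a0 εt ε' ζt = 0
            · rw [hz, zero_mul, zero_mul, zero_mul]
            have hc' := (ht_supp ε' ζt hz).1
            obtain ⟨u, v, huv, hσu, hσv, hcomm⟩ := sort_swap_adjacent hj ε' hP
            have hvu : (u : ℕ) + 1 < m := by rw [← huv]; exact v.isLt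
            have hveq : (⟨(u : ℕ) + 1, hvu⟩ : Fin m) = v := Fin.ext huv.symm
            have hms : ε' ∘ Tuple.sort ε' = minSeq N m hN0 k :=
              content_sort_eq_minSeq hN0 k ε' hc'
            have he0u : minSeq N m hN0 k u = ε' i₀ := by
              rw [← hms, Function.comp_apply, hσu]
            have he0v : minSeq N m hN0 k v = ε' i₀ := by
              rw [← hms, Function.comp_apply, hσv, hP]
            have hrel2 := (hg (fun t => ζ (Tuple.sort ε' t)) ξ
              (fun t => hζ (Tuple.sort ε' t)) hξ u hvu (minSeq N m hN0 k) μ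
              (minSeq N m hN0 k u) (minSeq N m hN0 k u)).2
            have hupd : Function.update
                (Function.update (minSeq N m hN0 k) u (minSeq N m hN0 k u))
                (⟨(u : ℕ) + 1, hvu⟩ : Fin m) (minSeq N m hN0 k u) = minSeq N m hN0 k := by
              rw [hveq]
              exact update_update_self' _ u v (by rw [he0u, he0v])
            rw [hupd] at hrel2
            have hptarg : (fun t => (fun t' => ζ (Tuple.sort ε' t'))
                  (Equiv.swap u (⟨(u : ℕ) + 1, hvu⟩ : Fin m) t))
                = fun t => ζt (Tuple.sort ε' t) := by
              funext t
              show ζ (Tuple.sort ε' (Equiv.swap u (⟨(u : ℕ) + 1, hvu⟩ : Fin m) t)) = _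
              rw [hveq, ← hcomm t]
              rfl
            rw [hptarg] at hrel2
            have hfac : ((fun t => ζ (Tuple.sort ε' t)) (⟨(u : ℕ) + 1, hvu⟩ : Fin m)
                  / (fun t => ζ (Tuple.sort ε' t)) u) ^ (N - 1) = R := by
              show (ζ (Tuple.sort ε' (⟨(u : ℕ) + 1, hvu⟩ : Fin m))
                / ζ (Tuple.sort ε' u)) ^ (N - 1) = R
              rw [hveq, hσu, hσv, hRdef]
            rw [hfac] at hrel2
            rw [hrel2]
            ring
          · rw [if_neg hP, sort_comp_swap hj ε' hP]
            rfl
        -- rewrite E1 into canonical form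
        have E1' : g ζt ξ εt μ = ∑ ε' : Fin m → Fin N,
            (if ε' i₀ = ε' j₀ then a0 εt ε' ζt * R else a0 εt (ε' ∘ s) ζt)
              * g (fun t => ζ (Tuple.sort ε' t)) ξ (minSeq N m hN0 k) μ := by
          rw [E1, Finset.sum_congr rfl fun ε' _ => hterm ε']
          rw [Finset.sum_ite]
          have hreidx : (∑ ε' ∈ Finset.univ.filter (fun ε' : Fin m → Fin N =>
                ¬ ε' i₀ = ε' j₀),
                a0 εt ε' ζt * g (fun t => ζ (Tuple.sort (ε' ∘ s) t)) ξ
                  (minSeq N m hN0 k) μ)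
              = ∑ ε' ∈ Finset.univ.filter (fun ε' : Fin m → Fin N => ¬ ε' i₀ = ε' j₀),
                a0 εt (ε' ∘ s) ζt * g (fun t => ζ (Tuple.sort ε' t)) ξ
                  (minSeq N m hN0 k) μ := by
            refine Finset.sum_bij' (fun ε' _ => ε' ∘ s) (fun ε' _ => ε' ∘ s)
              ?_ ?_ ?_ ?_ ?_
            · intro ε' hmem
              simp only [Finset.mem_filter, Finset.mem_univ, true_and] at hmem ⊢
              intro hcon
              apply hmem
              have h1 : (ε' ∘ s) i₀ = ε' j₀ := by
                show ε' (s i₀) = ε' j₀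
                rw [hs, Equiv.swap_apply_left]
              have h2 : (ε' ∘ s) j₀ = ε' i₀ := by
                show ε' (s j₀) = ε' i₀
                rw [hs, Equiv.swap_apply_right]
              rw [h1, h2] at hcon
              exact hcon.symm
            · intro ε' hmem
              simp only [Finset.mem_filter, Finset.mem_univ, true_and] at hmem ⊢
              intro hcon
              apply hmem
              have h1 : (ε' ∘ s) i₀ = ε' j₀ := by
                show ε' (s i₀) = ε' j₀
                rw [hs, Equiv.swap_apply_left]
              have h2 : (ε' ∘ s) j₀ = ε' i₀ := by
                show ε' (s j₀) = ε' i₀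
                rw [hs, Equiv.swap_apply_right]
              rw [h1, h2] at hcon
              exact hcon.symm
            · intro ε' _
              funext t
              simp only [Function.comp_apply, hss]
            · intro ε' _
              funext t
              simp only [Function.comp_apply, hss]
            · intro ε' _
              have hee : (ε' ∘ s) ∘ s = ε' := by
                funext t; simp only [Function.comp_apply, hss]
              rw [hee]
          rw [hreidx, ← Finset.sum_ite]
          refine Finset.sum_congr rfl fun ε' _ => ?_
          rw [ite_mul]
        -- put everything together
        rw [hsolve, E1', E2]
        have hfinal : ∀ ε' : Fin m → Fin N, a ε ε' ζ
            = b⁻¹ * (R⁻¹ * (if ε' i₀ = ε' j₀ then a0 εt ε' ζt * R else a0 εt (ε' ∘ s) ζt)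
              - c * a0 εt ε' ζ) := by
          intro ε'
          rw [hrow ε' ζ, ← hbdef, ← hcdef, ← hRdef, ← hζt]
        calc b⁻¹ * (R⁻¹ * (∑ ε' : Fin m → Fin N,
                (if ε' i₀ = ε' j₀ then a0 εt ε' ζt * R else a0 εt (ε' ∘ s) ζt)
                  * g (fun t => ζ (Tuple.sort ε' t)) ξ (minSeq N m hN0 k) μ)
              - c * ∑ ε' : Fin m → Fin N,
                a0 εt ε' ζ * g (fun t => ζ (Tuple.sort ε' t)) ξ (minSeq N m hN0 k) μ)
            = ∑ ε' : Fin m → Fin N,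
                b⁻¹ * (R⁻¹ * ((if ε' i₀ = ε' j₀ then a0 εt ε' ζt * R
                    else a0 εt (ε' ∘ s) ζt)
                  * g (fun t => ζ (Tuple.sort ε' t)) ξ (minSeq N m hN0 k) μ)
                  - c * (a0 εt ε' ζ
                    * g (fun t => ζ (Tuple.sort ε' t)) ξ (minSeq N m hN0 k) μ)) := by
              rw [Finset.mul_sum, Finset.mul_sum, ← Finset.sum_sub_distrib,
                ← Finset.mul_sum]
          _ = ∑ ε' : Fin m → Fin N, a ε ε' ζ
                * g (fun t => ζ (Tuple.sort ε' t)) ξ (minSeq N m hN0 k) μ := by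
              refine Finset.sum_congr rfl fun ε' _ => ?_
              rw [hfinal ε']
              ring

end Main
end TriExp

/-- triangular expansion of the components of `Ḡ`-type functions in terms
of the extremal component, with explicit diagonal coefficients
`a^{MM} = ∏_{r>l} ∏_{a∈M_r,b∈M_l,a<b} a_1(ζ_a/ζ_b)`.  Here sequences of content
`(k_0,…,k_{N-1})` play the role of ordered partitions, and for a sequence `ε'` the
permuted tuple `(ζ_{M'_0},…,ζ_{M'_{N-1}})` is `ζ ∘ Tuple.sort ε'` (stable sort by value,
ties broken by position). -/
theorem triangular_expansion_upper (N : ℕ) (hN : 2 ≤ N) (q : ℂ) (hq : q ≠ 0)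
    (m n : ℕ) (k : Fin N → ℕ) (hk : ∑ r : Fin N, k r = m) :
    ∃ a : (Fin m → Fin N) → (Fin m → Fin N) → (Fin m → ℂ) → ℂ,
      (∀ ε : Fin m → Fin N, hasContent ε k → ∀ ζ : Fin m → ℂ,
        a ε ε ζ = ∏ p : Fin m, ∏ s : Fin m,
          if p < s ∧ ε s < ε p then a1Fun N q (ζ p / ζ s) else 1)
      ∧ ∀ g : (Fin m → ℂ) → (Fin n → ℂ) → (Fin m → Fin N) → (Fin n → Fin N) → ℂ,
          (∀ (ζ : Fin m → ℂ) (ξ : Fin n → ℂ), (∀ t, ζ t ≠ 0) → (∀ t, ξ t ≠ 0) →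
            ∀ (i : Fin m) (hi : (i : ℕ) + 1 < m) (ε : Fin m → Fin N) (μ : Fin n → Fin N)
              (α β : Fin N),
              (α ≠ β →
                g (fun t => ζ (Equiv.swap i ⟨(i : ℕ) + 1, hi⟩ t)) ξ
                    (Function.update (Function.update ε i α) ⟨(i : ℕ) + 1, hi⟩ β) μ
                  = (ζ ⟨(i : ℕ) + 1, hi⟩ / ζ i) ^ (N - 1)
                    * (bFun N q (ζ i / ζ ⟨(i : ℕ) + 1, hi⟩)
                          * g ζ ξ (Function.update (Function.update ε i β)
                              ⟨(i : ℕ) + 1, hi⟩ α) μ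
                        + cFun N q α β (ζ i / ζ ⟨(i : ℕ) + 1, hi⟩)
                          * g ζ ξ (Function.update (Function.update ε i α)
                              ⟨(i : ℕ) + 1, hi⟩ β) μ))
              ∧ g (fun t => ζ (Equiv.swap i ⟨(i : ℕ) + 1, hi⟩ t)) ξ
                    (Function.update (Function.update ε i α) ⟨(i : ℕ) + 1, hi⟩ α) μ
                  = (ζ ⟨(i : ℕ) + 1, hi⟩ / ζ i) ^ (N - 1)
                    * g ζ ξ (Function.update (Function.update ε i α)
                        ⟨(i : ℕ) + 1, hi⟩ α) μ) →
          ∀ (ζ : Fin m → ℂ) (ξ : Fin n → ℂ), (∀ t, ζ t ≠ 0) → (∀ t, ξ t ≠ 0) →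
            (∀ p s : Fin m, p ≠ s → ζ p ^ N ≠ ζ s ^ N) →
            (∀ p s : Fin m, p ≠ s → q ^ 2 * (ζ p / ζ s) ^ N ≠ 1) →
            ∀ ε : Fin m → Fin N, hasContent ε k → ∀ μ : Fin n → Fin N,
              g ζ ξ ε μ
                = ∑ ε' : Fin m → Fin N,
                    if hasContent ε' k ∧ lexLE ε' ε then
                      a ε ε' ζ
                        * g (fun t => ζ (Tuple.sort ε' t)) ξ
                            (minSeq N m (by omega) k) μ
                    else 0 := by
  classical
  have hN0 : 0 < N := by omega
  obtain ⟨a, ha⟩ := TriExp.main N hN q hq m n k hN0 (m * m + 1)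
  have hinvbound : ∀ ε : Fin m → Fin N, TriExp.inv ε < m * m + 1 := by
    intro ε
    have h1 : TriExp.inv ε ≤ ∑ _p : Fin m × Fin m, 1 := by
      unfold TriExp.inv
      refine Finset.sum_le_sum fun p _ => ?_
      split_ifs <;> omega
    simp only [Finset.sum_const, smul_eq_mul, mul_one, Finset.card_univ,
      Fintype.card_prod, Fintype.card_fin] at h1
    omega
  refine ⟨a, ?_, ?_⟩
  · intro ε hc ζ
    exact ((ha ε hc (hinvbound ε)).1) ζ
  · intro g hg ζ ξ hζ hξ hdist hq2 ε hc μ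
    have hexp := (ha ε hc (hinvbound ε)).2.2 g hg ζ ξ hζ hξ hdist hq2 μ
    rw [hexp]
    refine Finset.sum_congr rfl fun ε' _ => ?_
    by_cases hcl : hasContent ε' k ∧ lexLE ε' ε
    · rw [if_pos hcl]
    · rw [if_neg hcl]
      have hzero : a ε ε' ζ = 0 := by
        by_contra hz
        obtain ⟨hc1, hd1⟩ := (ha ε hc (hinvbound ε)).2.1 ε' ζ hz
        exact hcl ⟨hc1, TriExp.dom_lexLE hd1⟩
      rw [hzero, zero_mul]
end
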